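/- arXiv:1709.04428 — 9 statements merged into one kernel-verified Lean document; each statement's English description precedes it below -/
import Mathlib

section
/- Let G be a d-regular simple graph on n vertices with real adjacency-matrix eigenvalues λ₁ ≥ λ₂ ≥ ⋯ ≥ λₙ (so λ₁ = d), and set n₊ = (n/d) · max_{2 ≤ i ≤ n} |λᵢ|. If X and Y are subsets of the vertex set with √(|X|·|Y|) > n₊, then there is an edge of G joining a vertex of X to a vertex of Y. In particular, if |X| > n₊ then two distinct vertices of X are adjacent. -/
open Matrix Finset

set_option maxHeartbeats 1000000 in
/-- **Spectral gap theorem for `d`-regular graphs.**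
Let `G` be a `d`-regular simple graph on `n` vertices (`d > 0`), with real adjacency-matrix
eigenvalues listed with multiplicity in decreasing order `lam 0 ≥ lam 1 ≥ ⋯` (so
`lam 0 = d`), and set `n₊ = (n/d) · max_{i ≥ 1} |lam i|`. If `X` and `Y` are vertex
subsets with `√(|X|·|Y|) > n₊`, then some vertex of `X` is adjacent to some vertex of `Y`;
in particular, if `|X| > n₊` then two distinct vertices of `X` are adjacent. -/
theorem spectral_gap_regular_graph
    {V : Type*} [Fintype V] [DecidableEq V]
    (G : SimpleGraph V) [DecidableRel G.Adj] (d : ℕ) (hd : 0 < d)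
    (hreg : G.IsRegularOfDegree d)
    (hA : (G.adjMatrix ℝ).IsHermitian)
    (lam : Fin (Fintype.card V) → ℝ)
    (e : Fin (Fintype.card V) ≃ V)
    (hlam : ∀ i, lam i = hA.eigenvalues (e i))
    (hanti : Antitone lam)
    (nstar : ℝ)
    (hnstar : nstar = ((Fintype.card V : ℝ) / (d : ℝ)) *
      (⨆ i : {i : Fin (Fintype.card V) // (i : ℕ) ≠ 0}, |lam i.1|))
    (X Y : Finset V) :
    (Real.sqrt ((X.card : ℝ) * (Y.card : ℝ)) > nstar →
      ∃ x ∈ X, ∃ y ∈ Y, G.Adj x y) ∧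
    ((X.card : ℝ) > nstar →
      ∃ x ∈ X, ∃ x' ∈ X, x ≠ x' ∧ G.Adj x x') := by
  suffices H : ∀ X Y : Finset V, Real.sqrt ((X.card : ℝ) * (Y.card : ℝ)) > nstar →
      ∃ x ∈ X, ∃ y ∈ Y, G.Adj x y by
    refine ⟨H X Y, fun hX => ?_⟩
    have h : Real.sqrt ((X.card : ℝ) * (X.card : ℝ)) > nstar := by
      rw [Real.sqrt_mul_self (by positivity)]; exact hX
    obtain ⟨x, hx, y, hy, hadj⟩ := H X X h
    exact ⟨x, hx, y, hy, hadj.ne, hadj⟩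
  clear X Y
  intro X Y hXY
  by_contra hno
  push_neg at hno
  have hd' : (0:ℝ) < (d:ℝ) := by exact_mod_cast hd
  -- V is nonempty, else contradiction
  rcases isEmpty_or_nonempty V with hV | hV
  · have hiE : IsEmpty {i : Fin (Fintype.card V) // (i : ℕ) ≠ 0} := by
      constructor
      rintro ⟨i, hi⟩
      have : Fintype.card V = 0 := Fintype.card_eq_zero
      rw [this] at i
      exact i.elim0
    have hμ : (⨆ i : {i : Fin (Fintype.card V) // (i : ℕ) ≠ 0}, |lam i.1|) = 0 :=
      Real.iSup_of_isEmpty _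
    have hX0 : X.card = 0 := by simp [Finset.eq_empty_of_isEmpty X]
    rw [hX0, hnstar, hμ] at hXY
    simp at hXY
  -- card V ≥ 2
  have hV2 : 1 < Fintype.card V := by
    obtain ⟨v⟩ := hV
    have hdeg : 0 < G.degree v := by rw [hreg v]; exact hd
    obtain ⟨w, hw⟩ := (G.degree_pos_iff_exists_adj v).mp hdeg
    exact Fintype.one_lt_card_iff.mpr ⟨v, w, G.ne_of_adj hw⟩
  have hn0 : (0:ℝ) < (Fintype.card V : ℝ) := by exact_mod_cast Nat.lt_of_lt_of_le Nat.zero_lt_one hV2.le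
  haveI hne : Nonempty {i : Fin (Fintype.card V) // (i : ℕ) ≠ 0} :=
    ⟨⟨⟨1, hV2⟩, one_ne_zero⟩⟩
  set μ := ⨆ i : {i : Fin (Fintype.card V) // (i : ℕ) ≠ 0}, |lam i.1| with hμdef
  have hμ_le : ∀ i : Fin (Fintype.card V), (i : ℕ) ≠ 0 → |lam i| ≤ μ := by
    intro i hi
    exact le_ciSup (f := fun i : {i : Fin (Fintype.card V) // (i : ℕ) ≠ 0} => |lam i.1|)
      (Set.Finite.bddAbove (Set.finite_range _)) ⟨i, hi⟩
  have hμ0 : 0 ≤ μ := le_trans (abs_nonneg _) (hμ_le ⟨1, hV2⟩ one_ne_zero)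
  have hnstar0 : 0 ≤ nstar := by
    rw [hnstar]
    positivity
  -- X and Y are nonempty
  have hXpos : (0:ℝ) < X.card := by
    by_contra h
    push_neg at h
    have : (X.card : ℝ) = 0 := le_antisymm h (by positivity)
    rw [this, zero_mul, Real.sqrt_zero] at hXY
    linarith
  have hYpos : (0:ℝ) < Y.card := by
    by_contra h
    push_neg at h
    have : (Y.card : ℝ) = 0 := le_antisymm h (by positivity)
    rw [this, mul_zero, Real.sqrt_zero] at hXY
    linarith
  -- if μ ≥ d the hypothesis is vacuous
  by_cases hμd : (d:ℝ) ≤ μ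
  · have h1 : (Fintype.card V : ℝ) ≤ nstar := by
      rw [hnstar]
      calc (Fintype.card V : ℝ) = ((Fintype.card V : ℝ)/(d:ℝ)) * (d:ℝ) := by field_simp
        _ ≤ ((Fintype.card V : ℝ)/(d:ℝ)) * μ :=
            mul_le_mul_of_nonneg_left hμd (le_of_lt (div_pos hn0 hd'))
    have h2 : Real.sqrt ((X.card : ℝ) * (Y.card : ℝ)) ≤ (Fintype.card V : ℝ) := by
      have hX : (X.card : ℝ) ≤ (Fintype.card V : ℝ) := by exact_mod_cast Finset.card_le_univ X
      have hY : (Y.card : ℝ) ≤ (Fintype.card V : ℝ) := by exact_mod_cast Finset.card_le_univ Y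
      calc Real.sqrt ((X.card : ℝ) * (Y.card : ℝ))
          ≤ Real.sqrt ((Fintype.card V : ℝ) * (Fintype.card V : ℝ)) := by
            apply Real.sqrt_le_sqrt; nlinarith
        _ = (Fintype.card V : ℝ) := Real.sqrt_mul_self hn0.le
    linarith
  push_neg at hμd
  -- main case
  set A := G.adjMatrix ℝ with hAdef
  set B := hA.eigenvectorBasis with hBdef
  set lam' := hA.eigenvalues with hlamdef
  have hsym : ∀ x y : V → ℝ, x ⬝ᵥ (A *ᵥ y) = (A *ᵥ x) ⬝ᵥ y := by
    intro x y
    rw [Matrix.dotProduct_mulVec, ← Matrix.mulVec_transpose, G.transpose_adjMatrix]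
  have hip : ∀ v w : EuclideanSpace ℝ V, (inner ℝ v w : ℝ) = ∑ a, v a * w a := by
    intro v w
    simp [PiLp.inner_apply, RCLike.inner_apply, mul_comm]
  -- eigen decomposition of mulVec on repr coordinates
  have h0 : ∀ (w : EuclideanSpace ℝ V) (j : V),
      B.repr (WithLp.toLp 2 (A *ᵥ w : V → ℝ)) j = lam' j * B.repr w j := by
    intro w j
    have h1 : B.repr (WithLp.toLp 2 (A *ᵥ w : V → ℝ)) j
        = (inner ℝ (B j) (WithLp.toLp 2 (A *ᵥ w : V → ℝ)) : ℝ) :=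
      B.repr_apply_apply _ j
    have h2 : (inner ℝ (B j) (WithLp.toLp 2 (A *ᵥ w : V → ℝ)) : ℝ)
        = (B j : V → ℝ) ⬝ᵥ (A *ᵥ (w : V → ℝ)) := by
      rw [hip]; rfl
    have h3 : A *ᵥ (B j : V → ℝ) = lam' j • (B j : V → ℝ) :=
      hA.mulVec_eigenvectorBasis j
    rw [h1, h2, hsym, h3, smul_dotProduct]
    congr 1
    rw [B.repr_apply_apply, hip]
    rfl
  have hPar : ∀ v w : EuclideanSpace ℝ V,
      ∑ j, B.repr v j * B.repr w j = ∑ a, v a * w a := by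
    intro v w
    have h := B.repr.inner_map_map v w
    rw [hip, hip] at h
    exact h
  set one : EuclideanSpace ℝ V := WithLp.toLp 2 (fun _ => (1:ℝ)) with honedef
  have hAone : WithLp.toLp 2 (A *ᵥ (one : V → ℝ) : V → ℝ) = (d:ℝ) • one := by
    ext a
    show (A *ᵥ fun _ => (1:ℝ)) a = (d:ℝ) * 1
    rw [SimpleGraph.adjMatrix_mulVec_apply, Finset.sum_const, nsmul_eq_mul, mul_one, mul_one]
    have := hreg a
    unfold SimpleGraph.degree at this
    exact_mod_cast congrArg (Nat.cast (R := ℝ)) this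
  -- components of `one` other than `e 0` vanish
  have h2 : ∀ j : V, j ≠ e 0 → B.repr one j = 0 := by
    intro j hj
    have hlj : lam' j ≠ (d:ℝ) := by
      have hi : (e.symm j : ℕ) ≠ 0 := by
        intro h
        apply hj
        have : e.symm j = (0 : Fin (Fintype.card V)) := Fin.ext h
        rw [← this, e.apply_symm_apply]
      have : |lam (e.symm j)| ≤ μ := hμ_le _ hi
      have hlam' : lam (e.symm j) = lam' j := by rw [hlam, e.apply_symm_apply]
      intro hcontra
      rw [hlam', hcontra] at this
      rw [abs_of_pos hd'] at this
      linarith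
    have key := h0 one j
    rw [hAone, _root_.map_smul] at key
    have key2 : (d:ℝ) * B.repr one j = lam' j * B.repr one j := key
    have : (lam' j - (d:ℝ)) * B.repr one j = 0 := by
      rw [sub_mul]; linarith
    rcases mul_eq_zero.mp this with h | h
    · exact absurd (by linarith : lam' j = (d:ℝ)) hlj
    · exact h
  have hone_sq : B.repr one (e 0) * B.repr one (e 0) = (Fintype.card V : ℝ) := by
    have h := hPar one one
    rw [Finset.sum_eq_single (e 0)] at h
    · simpa [one] using h
    · intro j _ hj
      rw [h2 j hj, zero_mul]
    · intro h; exact absurd (Finset.mem_univ _) h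
  have hone_ne : B.repr one (e 0) ≠ 0 := by
    intro h
    rw [h, zero_mul] at hone_sq
    linarith
  -- vectors orthogonal to one have zero component in e 0
  have h3 : ∀ v : EuclideanSpace ℝ V, (∑ a, v a) = 0 → B.repr v (e 0) = 0 := by
    intro v hv
    have h := hPar one v
    rw [Finset.sum_eq_single (e 0)] at h
    · have : ∑ a, one a * v a = 0 := by simpa [one] using hv
      rw [this] at h
      exact (mul_eq_zero.mp h).resolve_left hone_ne
    · intro j _ hj
      rw [h2 j hj, zero_mul]
    · intro h; exact absurd (Finset.mem_univ _) h
  -- the quadratic-form bound on the orthogonal complement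
  have h4 : ∀ v w : EuclideanSpace ℝ V, (∑ a, v a) = 0 → (∑ a, w a) = 0 →
      |∑ a, v a * (A *ᵥ (w : V → ℝ)) a|
        ≤ μ * (Real.sqrt (∑ a, v a * v a) * Real.sqrt (∑ a, w a * w a)) := by
    intro v w hv hw
    have hexp : ∑ a, v a * (A *ᵥ (w : V → ℝ)) a
        = ∑ j, B.repr v j * (lam' j * B.repr w j) := by
      rw [← hPar v (WithLp.toLp 2 ((A *ᵥ (w : V → ℝ)) : V → ℝ))]
      refine Finset.sum_congr rfl fun j _ => ?_
      rw [h0 w j]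
    rw [hexp]
    calc |∑ j, B.repr v j * (lam' j * B.repr w j)|
        ≤ ∑ j, |B.repr v j * (lam' j * B.repr w j)| := Finset.abs_sum_le_sum_abs _ _
      _ ≤ ∑ j, μ * (|B.repr v j| * |B.repr w j|) := by
          refine Finset.sum_le_sum fun j _ => ?_
          rw [abs_mul, abs_mul]
          by_cases hj : j = e 0
          · subst hj
            simp [h3 v hv]
          · have : |lam' j| ≤ μ := by
              have hi : (e.symm j : ℕ) ≠ 0 := by
                intro h
                apply hj
                have : e.symm j = (0 : Fin (Fintype.card V)) := Fin.ext h
                rw [← this, e.apply_symm_apply]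
              have := hμ_le _ hi
              rwa [hlam, e.apply_symm_apply] at this
            calc |B.repr v j| * (|lam' j| * |B.repr w j|)
                = |lam' j| * (|B.repr v j| * |B.repr w j|) := by ring
              _ ≤ μ * (|B.repr v j| * |B.repr w j|) := by
                  apply mul_le_mul_of_nonneg_right this (by positivity)
      _ = μ * ∑ j, |B.repr v j| * |B.repr w j| := by rw [Finset.mul_sum]
      _ ≤ μ * (Real.sqrt (∑ a, v a * v a) * Real.sqrt (∑ a, w a * w a)) := by
          apply mul_le_mul_of_nonneg_left _ hμ0
          have hcs := Real.sum_mul_le_sqrt_mul_sqrt Finset.univ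
            (fun j => |B.repr v j|) (fun j => |B.repr w j|)
          have hv2 : ∑ j, |B.repr v j| ^ 2 = ∑ a, v a * v a := by
            rw [← hPar v v]
            refine Finset.sum_congr rfl fun j _ => ?_
            rw [sq_abs]; ring
          have hw2 : ∑ j, |B.repr w j| ^ 2 = ∑ a, w a * w a := by
            rw [← hPar w w]
            refine Finset.sum_congr rfl fun j _ => ?_
            rw [sq_abs]; ring
          rw [hv2, hw2] at hcs
          exact hcs
  -- indicator vectors and their centered versions
  have hnR0 : (Fintype.card V : ℝ) ≠ 0 := ne_of_gt hn0
  set x : EuclideanSpace ℝ V := WithLp.toLp 2 (fun a => if a ∈ X then (1:ℝ) else 0) with hxdef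
  set y : EuclideanSpace ℝ V := WithLp.toLp 2 (fun a => if a ∈ Y then (1:ℝ) else 0) with hydef
  set α : ℝ := (X.card : ℝ) / (Fintype.card V : ℝ) with hα
  set β : ℝ := (Y.card : ℝ) / (Fintype.card V : ℝ) with hβ
  set v : EuclideanSpace ℝ V := WithLp.toLp 2 (fun a => x a - α) with hvdef
  set w : EuclideanSpace ℝ V := WithLp.toLp 2 (fun a => y a - β) with hwdef
  have hsx : ∑ a, x a = (X.card : ℝ) := by simp [hxdef]
  have hsy : ∑ a, y a = (Y.card : ℝ) := by simp [hydef]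
  have hxx : ∑ a, x a * x a = (X.card : ℝ) := by
    rw [← hsx]
    refine Finset.sum_congr rfl fun a _ => ?_
    by_cases h : a ∈ X <;> simp [hxdef, h]
  have hyy : ∑ a, y a * y a = (Y.card : ℝ) := by
    rw [← hsy]
    refine Finset.sum_congr rfl fun a _ => ?_
    by_cases h : a ∈ Y <;> simp [hydef, h]
  have hsv : ∑ a, v a = 0 := by
    simp only [hvdef]
    rw [Finset.sum_sub_distrib, hsx, Finset.sum_const, nsmul_eq_mul, hα]
    field_simp
    simp
  have hsw : ∑ a, w a = 0 := by
    simp only [hwdef]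
    rw [Finset.sum_sub_distrib, hsy, Finset.sum_const, nsmul_eq_mul, hβ]
    field_simp
    simp
  have hvv : ∑ a, v a * v a ≤ (X.card : ℝ) := by
    have hexp : ∑ a, v a * v a
        = (X.card:ℝ) - 2*α*(X.card:ℝ) + (Fintype.card V : ℝ) * α^2 := by
      calc ∑ a, v a * v a = ∑ a, (x a * x a - 2*α*(x a) + α^2) :=
            Finset.sum_congr rfl fun a _ => by simp only [hvdef]; ring
        _ = (∑ a, x a * x a) - 2*α*(∑ a, x a) + (Fintype.card V : ℝ) * α^2 := by
            rw [Finset.sum_add_distrib, Finset.sum_sub_distrib, ← Finset.mul_sum,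
              Finset.sum_const, nsmul_eq_mul, Finset.card_univ]
        _ = (X.card:ℝ) - 2*α*(X.card:ℝ) + (Fintype.card V : ℝ) * α^2 := by rw [hxx, hsx]
    rw [hexp, hα]
    have h1 : (X.card:ℝ) - 2*((X.card:ℝ)/(Fintype.card V : ℝ))*(X.card:ℝ)
        + (Fintype.card V : ℝ) * ((X.card:ℝ)/(Fintype.card V : ℝ))^2
        = (X.card:ℝ) - (X.card:ℝ)^2/(Fintype.card V : ℝ) := by
      field_simp
      ring
    rw [h1]
    have : 0 ≤ (X.card:ℝ)^2/(Fintype.card V : ℝ) := by positivity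
    linarith
  have hww : ∑ a, w a * w a ≤ (Y.card : ℝ) := by
    have hexp : ∑ a, w a * w a
        = (Y.card:ℝ) - 2*β*(Y.card:ℝ) + (Fintype.card V : ℝ) * β^2 := by
      calc ∑ a, w a * w a = ∑ a, (y a * y a - 2*β*(y a) + β^2) :=
            Finset.sum_congr rfl fun a _ => by simp only [hwdef]; ring
        _ = (∑ a, y a * y a) - 2*β*(∑ a, y a) + (Fintype.card V : ℝ) * β^2 := by
            rw [Finset.sum_add_distrib, Finset.sum_sub_distrib, ← Finset.mul_sum,
              Finset.sum_const, nsmul_eq_mul, Finset.card_univ]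
        _ = (Y.card:ℝ) - 2*β*(Y.card:ℝ) + (Fintype.card V : ℝ) * β^2 := by rw [hyy, hsy]
    rw [hexp, hβ]
    have h1 : (Y.card:ℝ) - 2*((Y.card:ℝ)/(Fintype.card V : ℝ))*(Y.card:ℝ)
        + (Fintype.card V : ℝ) * ((Y.card:ℝ)/(Fintype.card V : ℝ))^2
        = (Y.card:ℝ) - (Y.card:ℝ)^2/(Fintype.card V : ℝ) := by
      field_simp
      ring
    rw [h1]
    have : 0 ≤ (Y.card:ℝ)^2/(Fintype.card V : ℝ) := by positivity
    linarith
  -- no edge between X and Y kills the quadratic form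
  have hxAy : ∑ a, x a * (A *ᵥ (y : V → ℝ)) a = 0 := by
    refine Finset.sum_eq_zero fun a _ => ?_
    by_cases haX : a ∈ X
    · have hz : (A *ᵥ (y : V → ℝ)) a = 0 := by
        rw [SimpleGraph.adjMatrix_mulVec_apply]
        refine Finset.sum_eq_zero fun u hu => ?_
        have hadj : G.Adj a u := (SimpleGraph.mem_neighborFinset G a u).mp hu
        have : u ∉ Y := fun hY => hno a haX u hY hadj
        simp [hydef, this]
      rw [hz, mul_zero]
    · simp [hxdef, haX]
  -- entries of A *ᵥ one
  have h2d : ∀ a : V, (A *ᵥ (one : V → ℝ)) a = (d:ℝ) := by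
    intro a
    have hc : (WithLp.toLp 2 (A *ᵥ (one : V → ℝ))) a = ((d:ℝ) • one) a :=
      congrArg (fun z : EuclideanSpace ℝ V => z a) hAone
    have : ((d:ℝ) • one) a = (d:ℝ) := by simp [honedef]
    rw [this] at hc
    exact hc
  -- sum of A *ᵥ u vanishes for mean-zero u
  have hsumAw : ∀ u : EuclideanSpace ℝ V, (∑ a, u a) = 0 →
      ∑ a, (A *ᵥ (u : V → ℝ)) a = 0 := by
    intro u hu
    have h1 : (∑ a, (one : V → ℝ) a * (A *ᵥ (u : V → ℝ)) a)
        = ∑ a, (A *ᵥ (one : V → ℝ)) a * u a := hsym one u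
    calc ∑ a, (A *ᵥ (u : V → ℝ)) a
        = ∑ a, (one : V → ℝ) a * (A *ᵥ (u : V → ℝ)) a := by
          refine Finset.sum_congr rfl fun a _ => ?_
          simp [honedef]
      _ = ∑ a, (A *ᵥ (one : V → ℝ)) a * u a := h1
      _ = ∑ a, (d:ℝ) * u a := Finset.sum_congr rfl fun a _ => by rw [h2d a]
      _ = (d:ℝ) * ∑ a, u a := by rw [Finset.mul_sum]
      _ = 0 := by rw [hu, mul_zero]
  -- pointwise action of A on y
  have hAyw : ∀ a : V, (A *ᵥ (y : V → ℝ)) a = (A *ᵥ (w : V → ℝ)) a + β * (d:ℝ) := by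
    intro a
    have hyw : (y : V → ℝ) = (w : V → ℝ) + β • (one : V → ℝ) := by
      funext b
      show y b = w b + β * one b
      simp only [hwdef, honedef]
      ring
    rw [hyw, Matrix.mulVec_add, Matrix.mulVec_smul, Pi.add_apply, Pi.smul_apply,
      smul_eq_mul, h2d a]
  -- decomposition of the quadratic form
  have hdec : ∑ a, x a * (A *ᵥ (y : V → ℝ)) a
      = (∑ a, v a * (A *ᵥ (w : V → ℝ)) a)
        + (d:ℝ) * (X.card:ℝ) * (Y.card:ℝ) / (Fintype.card V : ℝ) := by
    have hterm : ∀ a : V, x a * (A *ᵥ (y : V → ℝ)) a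
        = v a * (A *ᵥ (w : V → ℝ)) a + α * (A *ᵥ (w : V → ℝ)) a
          + (β*(d:ℝ)) * v a + α*(β*(d:ℝ)) := by
      intro a
      have hx : x a = v a + α := by simp only [hvdef]; ring
      rw [hAyw a, hx]
      ring
    calc ∑ a, x a * (A *ᵥ (y : V → ℝ)) a
        = ∑ a, (v a * (A *ᵥ (w : V → ℝ)) a + α * (A *ᵥ (w : V → ℝ)) a
            + (β*(d:ℝ)) * v a + α*(β*(d:ℝ))) := Finset.sum_congr rfl fun a _ => hterm a
      _ = (∑ a, v a * (A *ᵥ (w : V → ℝ)) a) + α * (∑ a, (A *ᵥ (w : V → ℝ)) a)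
            + (β*(d:ℝ)) * (∑ a, v a) + (Fintype.card V : ℝ) * (α*(β*(d:ℝ))) := by
          rw [Finset.sum_add_distrib, Finset.sum_add_distrib, Finset.sum_add_distrib,
            ← Finset.mul_sum, ← Finset.mul_sum, Finset.sum_const, nsmul_eq_mul,
            Finset.card_univ]
      _ = (∑ a, v a * (A *ᵥ (w : V → ℝ)) a)
            + (d:ℝ) * (X.card:ℝ) * (Y.card:ℝ) / (Fintype.card V : ℝ) := by
          rw [hsumAw w hsw, hsv, mul_zero, mul_zero, add_zero, add_zero, hα, hβ]
          congr 1
          field_simp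
  -- put everything together
  have hb := h4 v w hsv hsw
  set s := Real.sqrt ((X.card:ℝ)*(Y.card:ℝ)) with hsdef
  have hsmul : Real.sqrt (X.card:ℝ) * Real.sqrt (Y.card:ℝ) = s := by
    rw [hsdef]
    exact (Real.sqrt_mul (by positivity) _).symm
  have hineq : |∑ a, v a * (A *ᵥ (w : V → ℝ)) a| ≤ μ * s := by
    calc |∑ a, v a * (A *ᵥ (w : V → ℝ)) a|
        ≤ μ * (Real.sqrt (∑ a, v a * v a) * Real.sqrt (∑ a, w a * w a)) := hb
      _ ≤ μ * (Real.sqrt (X.card:ℝ) * Real.sqrt (Y.card:ℝ)) := by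
          exact mul_le_mul_of_nonneg_left
            (mul_le_mul (Real.sqrt_le_sqrt hvv) (Real.sqrt_le_sqrt hww)
              (Real.sqrt_nonneg _) (Real.sqrt_nonneg _)) hμ0
      _ = μ * s := by rw [hsmul]
  have hzero : (∑ a, v a * (A *ᵥ (w : V → ℝ)) a)
      + (d:ℝ) * (X.card:ℝ) * (Y.card:ℝ) / (Fintype.card V : ℝ) = 0 := by
    rw [← hdec]; exact hxAy
  have hspos : 0 < s := Real.sqrt_pos.mpr (by positivity)
  have hs2 : s * s = (X.card:ℝ)*(Y.card:ℝ) := Real.mul_self_sqrt (by positivity)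
  have hkey : (d:ℝ) * (X.card:ℝ) * (Y.card:ℝ) / (Fintype.card V : ℝ) ≤ μ * s := by
    have habs : |∑ a, v a * (A *ᵥ (w : V → ℝ)) a|
        = (d:ℝ) * (X.card:ℝ) * (Y.card:ℝ) / (Fintype.card V : ℝ) := by
      have h5 : ∑ a, v a * (A *ᵥ (w : V → ℝ)) a
          = -((d:ℝ) * (X.card:ℝ) * (Y.card:ℝ) / (Fintype.card V : ℝ)) := by linarith
      rw [h5, abs_neg, abs_of_nonneg (by positivity)]
    linarith [hineq, habs.symm.le, habs.le]
  have hkey2 : (d:ℝ) * (s * s) / (Fintype.card V : ℝ) ≤ μ * s := by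
    rw [hs2]
    calc (d:ℝ) * ((X.card:ℝ)*(Y.card:ℝ)) / (Fintype.card V : ℝ)
        = (d:ℝ) * (X.card:ℝ) * (Y.card:ℝ) / (Fintype.card V : ℝ) := by ring
      _ ≤ μ * s := hkey
  rw [hnstar] at hXY
  -- hXY : s > (n/d) * μ ; hkey2 : (d/n) s² ≤ μ s : contradiction
  have hfrac : (d:ℝ) * s ≤ μ * (Fintype.card V : ℝ) := by
    have h6 := mul_le_mul_of_nonneg_right hkey2 hn0.le
    have hexp : (d:ℝ) * (s * s) / (Fintype.card V : ℝ) * (Fintype.card V : ℝ)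
        = (d:ℝ) * s * s := by field_simp
    rw [hexp] at h6
    have h7 : ((d:ℝ) * s) * s ≤ (μ * (Fintype.card V : ℝ)) * s := by
      calc ((d:ℝ) * s) * s = (d:ℝ) * s * s := by ring
        _ ≤ μ * s * (Fintype.card V : ℝ) := h6
        _ = (μ * (Fintype.card V : ℝ)) * s := by ring
    exact le_of_mul_le_mul_right h7 hspos
  have hlast : s ≤ (Fintype.card V : ℝ) / (d:ℝ) * μ := by
    rw [div_mul_eq_mul_div, le_div_iff₀ hd']
    calc s * (d:ℝ) = (d:ℝ) * s := by ring
      _ ≤ μ * (Fintype.card V : ℝ) := hfrac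
      _ = (Fintype.card V : ℝ) * μ := by ring
  linarith
end

section
/- Let R be a commutative finite ring with identity and J its Jacobson radical, and let p(x) ∈ R[x]. Suppose a₀ ∈ R satisfies p(a₀) ∈ J and p′(a₀) + J is a unit in R/J. Then p′(a₀) is a unit in R, and the element r = a₀ − p(a₀)·p′(a₀)⁻¹ satisfies: p(r) ∈ J², r − a₀ ∈ J, and p′(r) is a unit in R. -/
lemma isUnit_of_isUnit_mk_jacobson {R : Type*} [CommRing R]
    (J : Ideal R) (hJ : J = Ideal.jacobson (⊥ : Ideal R)) {x : R}
    (h : IsUnit (Ideal.Quotient.mk J x)) : IsUnit x := by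
  obtain ⟨u, hu⟩ := h
  obtain ⟨y, hy⟩ := Ideal.Quotient.mk_surjective ((u⁻¹ : (R ⧸ J)ˣ) : R ⧸ J)
  have hxy : x * y - 1 ∈ J := by
    rw [← Ideal.Quotient.eq_zero_iff_mem, map_sub, map_mul, ← hu, hy, map_one,
      Units.mul_inv, sub_self]
  have := Ideal.isUnit_of_sub_one_mem_jacobson_bot (x * y) (hJ ▸ hxy)
  exact isUnit_of_mul_isUnit_left this

/-- **Hensel's lemma for the Jacobson radical of a finite commutative ring.**
Let `R` be a finite commutative ring with identity, `J` its Jacobson radical, and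
`p ∈ R[x]`. If `a₀ ∈ R` satisfies `p(a₀) ∈ J` and `p′(a₀) + J` is a unit in `R/J`, then
`p′(a₀)` is a unit in `R`, and `r = a₀ − p(a₀)·p′(a₀)⁻¹` satisfies `p(r) ∈ J²`,
`r − a₀ ∈ J`, and `p′(r)` is a unit in `R`. -/
theorem hensel_jacobson_radical
    {R : Type*} [CommRing R] [Fintype R]
    (J : Ideal R) (hJ : J = Ideal.jacobson (⊥ : Ideal R))
    (p : Polynomial R) (a₀ : R)
    (h0 : p.eval a₀ ∈ J)
    (h1 : IsUnit (Ideal.Quotient.mk J (p.derivative.eval a₀))) :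
    IsUnit (p.derivative.eval a₀) ∧
    p.eval (a₀ - p.eval a₀ * Ring.inverse (p.derivative.eval a₀)) ∈ J ^ 2 ∧
    (a₀ - p.eval a₀ * Ring.inverse (p.derivative.eval a₀)) - a₀ ∈ J ∧
    IsUnit (p.derivative.eval (a₀ - p.eval a₀ * Ring.inverse (p.derivative.eval a₀))) := by
  have hu : IsUnit (p.derivative.eval a₀) := isUnit_of_isUnit_mk_jacobson J hJ h1
  set u := Ring.inverse (p.derivative.eval a₀) with hu'
  set t : R := -(p.eval a₀ * u) with ht
  have htJ : t ∈ J := J.neg_mem (J.mul_mem_right _ h0)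
  have hr : a₀ - p.eval a₀ * u = a₀ + t := by ring
  obtain ⟨k, hk⟩ := p.binomExpansion a₀ t
  have hsub : a₀ - p.eval a₀ * u - a₀ ∈ J := by
    rw [hr]; simpa using htJ
  refine ⟨hu, ?_, hsub, ?_⟩
  · rw [hr, hk]
    have h2 : p.derivative.eval a₀ * u = 1 := hu' ▸ Ring.mul_inverse_cancel _ hu
    have : p.eval a₀ + p.derivative.eval a₀ * t = 0 := by
      rw [ht]; linear_combination (-(p.eval a₀)) * h2
    rw [this, zero_add, sq, show k * t ^ 2 = k * t * t by ring]
    exact Ideal.mul_mem_mul (J.mul_mem_left k htJ) htJ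
  · apply isUnit_of_isUnit_mk_jacobson J hJ
    have hdvd := Polynomial.sub_dvd_eval_sub (a₀ - p.eval a₀ * u) a₀ p.derivative
    have hmem : p.derivative.eval (a₀ - p.eval a₀ * u) - p.derivative.eval a₀ ∈ J := by
      obtain ⟨c, hc⟩ := hdvd
      rw [hc]
      exact J.mul_mem_right _ hsub
    have : Ideal.Quotient.mk J (p.derivative.eval (a₀ - p.eval a₀ * u)) =
        Ideal.Quotient.mk J (p.derivative.eval a₀) := Ideal.Quotient.eq.mpr hmem
    rw [this]; exact h1
end

section
/- Let R be a finite commutative ring with identity and J its Jacobson radical, let k and m be positive integers, and let α, B₁, B₂, …, B_m ∈ R. If α − (B₁^k + B₂^k + ⋯ + B_m^k) ∈ J and k·B₁^{k−1} is a unit in R, then there exists β ∈ R such that α = β^k + B₂^k + ⋯ + B_m^k. -/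
open Polynomial

lemma isAdicComplete_of_nilpotent {R : Type*} [CommRing R] (I : Ideal R)
    (h : IsNilpotent I) : IsAdicComplete I R := by
  obtain ⟨n, hn⟩ := h
  haveI h1 : IsHausdorff I R := by
    constructor
    intro x hx
    have := hx n
    rw [hn] at this
    simp only [Submodule.zero_eq_bot, Submodule.bot_smul, SModEq.bot] at this
    exact this
  haveI h2 : IsPrecomplete I R := by
    constructor
    intro f hf
    refine ⟨f n, fun m => ?_⟩
    rcases le_or_gt m n with h' | h'
    · exact hf h'
    · have h0 : I ^ m = ⊥ := by
        have h3 : I ^ m ≤ I ^ n := Ideal.pow_le_pow_right h'.le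
        rw [hn, Submodule.zero_eq_bot] at h3
        exact le_bot_iff.mp h3
      have : f n ≡ f m [SMOD (I ^ n • ⊤ : Ideal R)] := hf h'.le
      rw [hn] at this
      simp only [Submodule.zero_eq_bot, Submodule.bot_smul, SModEq.bot] at this
      rw [h0, this]
  constructor

/-- Let `R` be a finite commutative ring with identity, `J` its Jacobson radical, and
`k, m ≥ 1`. If `α − (B₁^k + ⋯ + B_m^k) ∈ J` and `k·B₁^{k−1}` is a unit in `R`, then there
is `β ∈ R` with `α = β^k + B₂^k + ⋯ + B_m^k`. -/
theorem waring_lift_mod_jacobson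
    {R : Type*} [CommRing R] [Fintype R]
    (k m : ℕ) (hk : 0 < k) (hm : 0 < m)
    (α : R) (B : Fin m → R)
    (h1 : α - ∑ i, B i ^ k ∈ Ideal.jacobson (⊥ : Ideal R))
    (h2 : IsUnit ((k : R) * B ⟨0, hm⟩ ^ (k - 1))) :
    ∃ β : R, α = β ^ k + ∑ i ∈ Finset.univ.erase ⟨0, hm⟩, B i ^ k := by
  set J := Ideal.jacobson (⊥ : Ideal R) with hJ
  haveI : IsAdicComplete J R :=
    isAdicComplete_of_nilpotent J IsArtinianRing.isNilpotent_jacobson_bot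
  haveI hH : HenselianRing R J := inferInstance
  set c : R := α - ∑ i ∈ Finset.univ.erase ⟨0, hm⟩, B i ^ k with hc
  set f : R[X] := X ^ k - C c with hf
  have hmonic : f.Monic := by
    apply Polynomial.monic_X_pow_sub
    simpa using Polynomial.degree_C_le.trans_lt (by exact_mod_cast hk)
  have hsum : ∑ i, B i ^ k
      = B ⟨0, hm⟩ ^ k + ∑ i ∈ Finset.univ.erase ⟨0, hm⟩, B i ^ k :=
    (Finset.add_sum_erase _ _ (Finset.mem_univ _)).symm
  have heval : f.eval (B ⟨0, hm⟩) ∈ J := by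
    have : f.eval (B ⟨0, hm⟩) = -(α - ∑ i, B i ^ k) := by
      simp only [hf, eval_sub, eval_pow, eval_X, eval_C, hc, hsum]; ring
    rw [this]
    exact neg_mem h1
  have hderiv : IsUnit (Ideal.Quotient.mk J (f.derivative.eval (B ⟨0, hm⟩))) := by
    have : f.derivative.eval (B ⟨0, hm⟩) = (k : R) * B ⟨0, hm⟩ ^ (k - 1) := by
      simp [hf, Polynomial.derivative_X_pow]
    rw [this]
    exact h2.map _
  obtain ⟨a, ha, -⟩ := hH.is_henselian f hmonic (B ⟨0, hm⟩) heval hderiv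
  refine ⟨a, ?_⟩
  have : a ^ k - c = 0 := by simpa [hf, Polynomial.IsRoot] using ha
  have : a ^ k = c := by linear_combination this
  rw [this, hc]; ring
end

section
/- Let F_q be the finite field with q elements, k a positive integer, R_k = {α^k : α ∈ F_q} the set of k-th powers, and d = gcd(k, q−1). If every element of F_q can be written as a sum of finitely many k-th powers, then every element of F_q can be written as a sum of d k-th powers (in particular, as a sum of k k-th powers). -/
open Finset Polynomial

namespace SumPowAux

variable {F : Type*} [Field F] [Fintype F] [DecidableEq F] (k : ℕ)

noncomputable def P : Finset F := Finset.univ.image (fun x : F => x ^ k)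

noncomputable def S : ℕ → Finset F
  | 0 => {0}
  | m+1 => Finset.image₂ (· + ·) (S m) (P k)

lemma mem_S (m : ℕ) (v : F) : v ∈ S k m ↔ ∃ β : Fin m → F, v = ∑ i, β i ^ k := by
  induction m generalizing v with
  | zero => simp [S]
  | succ m ih =>
    simp only [S, Finset.mem_image₂, P, Finset.mem_image, Finset.mem_univ, true_and]
    constructor
    · rintro ⟨a, ha, b, ⟨x, rfl⟩, rfl⟩
      obtain ⟨β, rfl⟩ := (ih a).1 ha
      exact ⟨Fin.snoc β x, by simp [Fin.sum_univ_castSucc]⟩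
    · rintro ⟨β, rfl⟩
      exact ⟨∑ i : Fin m, β i.castSucc ^ k, (ih _).2 ⟨_, rfl⟩, β (Fin.last m) ^ k, ⟨_, rfl⟩,
        (Fin.sum_univ_castSucc (fun i => β i ^ k)).symm⟩

lemma zero_mem_S (hk : 0 < k) (m : ℕ) : (0 : F) ∈ S k m := by
  rw [mem_S]
  exact ⟨0, by simp [zero_pow hk.ne']⟩

lemma mul_mem_S {m : ℕ} {v : F} (hv : v ∈ S k m) (α : F) : v * α ^ k ∈ S k m := by
  rw [mem_S] at hv ⊢
  obtain ⟨β, rfl⟩ := hv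
  exact ⟨fun i => β i * α, by simp [mul_pow, Finset.sum_mul]⟩

lemma S_mono (hk : 0 < k) : Monotone (S k (F := F)) := by
  have h1 : ∀ m, S k (F := F) m ⊆ S k (m + 1) := by
    intro m v hv
    rw [mem_S] at hv ⊢
    obtain ⟨β, rfl⟩ := hv
    exact ⟨Fin.snoc β 0, by simp [Fin.sum_univ_castSucc, zero_pow hk.ne']⟩
  exact monotone_nat_of_le_succ h1

lemma S_stab {m : ℕ} (hst : S k (F := F) m = S k (m + 1)) :
    ∀ j, S k (F := F) (m + j) = S k m := by
  intro j
  induction j with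
  | zero => rfl
  | succ j ih =>
    show S k (m + j + 1) = S k m
    show Finset.image₂ (· + ·) (S k (m + j)) (P k) = S k m
    rw [ih]
    exact hst.symm

lemma S_univ_of_stab (hk : 0 < k) (hcov : ∀ v : F, ∃ l, v ∈ S k l) {m : ℕ}
    (hst : S k (F := F) m = S k (m + 1)) : S k (F := F) m = Finset.univ := by
  apply Finset.eq_univ_of_forall
  intro v
  obtain ⟨l, hl⟩ := hcov v
  have := S_mono k hk (le_add_self : l ≤ m + l) hl
  rwa [S_stab k hst l] at this

/-- Nonzero k-th powers. -/
noncomputable def H : Finset F := Finset.univ.image (fun u : Fˣ => ((u : F)) ^ k)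

lemma card_units_le (hk : 0 < k) : Fintype.card Fˣ ≤ Nat.gcd k (Fintype.card F - 1) * (H k (F := F)).card := by
  set d := Nat.gcd k (Fintype.card F - 1) with hd
  have hd0 : 0 < d := Nat.gcd_pos_of_pos_left _ hk
  have key : ∀ a ∈ Finset.univ.image (fun u : Fˣ => ((u : F)) ^ k),
      ((Finset.univ : Finset Fˣ).filter (fun x : Fˣ => ((x : F)) ^ k = a)).card ≤ d := by
    intro a ha
    obtain ⟨u, _, hu⟩ := Finset.mem_image.1 ha
    calc ((Finset.univ : Finset Fˣ).filter (fun x : Fˣ => ((x : F)) ^ k = a)).card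
        ≤ ((nthRoots d (1 : F)).toFinset).card := by
          apply Finset.card_le_card_of_injOn (fun v => ((v * u⁻¹ : Fˣ) : F))
          · intro v hv
            simp only [Finset.mem_coe, Finset.mem_filter] at hv ⊢
            have hvu : v ^ k = u ^ k := Units.ext (by push_cast; rw [hv.2, hu])
            have hvk : (v * u⁻¹) ^ k = 1 := by
              rw [mul_pow, inv_pow, hvu]
              group
            have hord : orderOf (v * u⁻¹) ∣ d := by
              refine Nat.dvd_gcd (orderOf_dvd_of_pow_eq_one hvk) ?_
              rw [← Fintype.card_units]
              exact orderOf_dvd_card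
            have : (v * u⁻¹) ^ d = 1 := orderOf_dvd_iff_pow_eq_one.1 hord
            rw [Multiset.mem_toFinset, mem_nthRoots hd0,
              ← Units.val_pow_eq_pow_val, this, Units.val_one]
          · intro a' _ b' _ hab
            have : (a' * u⁻¹ : Fˣ) = b' * u⁻¹ := Units.ext hab
            exact mul_right_cancel this
      _ ≤ (nthRoots d (1 : F)).card := Multiset.toFinset_card_le _
      _ ≤ d := card_nthRoots d 1
  calc Fintype.card Fˣ = (Finset.univ : Finset Fˣ).card := (Finset.card_univ).symm
    _ ≤ d * (Finset.univ.image (fun u : Fˣ => ((u : F)) ^ k)).card :=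
        Finset.card_le_mul_card_image _ d key
    _ = d * (H k (F := F)).card := rfl

lemma card_step (hk : 0 < k) {m : ℕ} (hne : S k (F := F) m ≠ S k (m + 1)) :
    (S k (F := F) m).card + (H k (F := F)).card ≤ (S k (F := F) (m + 1)).card := by
  have hsub : S k (F := F) m ⊆ S k (m + 1) := S_mono k hk (Nat.le_succ m)
  obtain ⟨x, hx1, hx2⟩ := Finset.exists_of_ssubset (lt_of_le_of_ne hsub hne)
  have hx0 : x ≠ 0 := fun h => hx2 (h ▸ zero_mem_S k hk m)
  set C : Finset F := (H k (F := F)).image (fun y => x * y) with hC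
  have hCcard : C.card = (H k (F := F)).card :=
    Finset.card_image_of_injective _ (mul_right_injective₀ hx0)
  have hCsub : C ⊆ S k (m + 1) := by
    intro c hc
    obtain ⟨y, hy, rfl⟩ := Finset.mem_image.1 hc
    obtain ⟨u, _, rfl⟩ := Finset.mem_image.1 hy
    exact mul_mem_S k hx1 _
  have hdisj : Disjoint (S k (F := F) m) C := by
    rw [Finset.disjoint_right]
    intro c hc hcS
    obtain ⟨y, hy, rfl⟩ := Finset.mem_image.1 hc
    obtain ⟨u, _, rfl⟩ := Finset.mem_image.1 hy
    apply hx2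
    have := mul_mem_S k hcS ((u⁻¹ : Fˣ) : F)
    have he : x * ((u : F)) ^ k * (((u⁻¹ : Fˣ) : F)) ^ k = x := by
      rw [mul_assoc, ← mul_pow]
      norm_cast
      simp [zero_pow hk.ne']
    rwa [he] at this
  calc (S k (F := F) m).card + (H k (F := F)).card
      = (S k (F := F) m ∪ C).card := by rw [Finset.card_union_of_disjoint hdisj, hCcard]
    _ ≤ (S k (F := F) (m + 1)).card :=
        Finset.card_le_card (Finset.union_subset hsub hCsub)

lemma main_induction (hk : 0 < k) (hcov : ∀ v : F, ∃ l, v ∈ S k l) (m : ℕ) :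
    S k (F := F) m = Finset.univ ∨ 1 + m * (H k (F := F)).card ≤ (S k (F := F) m).card := by
  induction m with
  | zero => right; simp [S]
  | succ m ih =>
    rcases ih with h1 | h1
    · left
      exact Finset.univ_subset_iff.1 (h1 ▸ S_mono k hk (Nat.le_succ m))
    · by_cases hst : S k (F := F) m = S k (m + 1)
      · left
        rw [← hst]
        exact S_univ_of_stab k hk hcov hst
      · right
        calc 1 + (m + 1) * (H k (F := F)).card
            = (1 + m * (H k (F := F)).card) + (H k (F := F)).card := by ring
          _ ≤ (S k (F := F) m).card + (H k (F := F)).card := by omega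
          _ ≤ (S k (F := F) (m + 1)).card := card_step k hk hst

lemma S_gcd_univ (hk : 0 < k) (hcov : ∀ v : F, ∃ l, v ∈ S k l) :
    S k (F := F) (Nat.gcd k (Fintype.card F - 1)) = Finset.univ := by
  set d := Nat.gcd k (Fintype.card F - 1) with hd
  rcases main_induction k hk hcov d with h1 | h1
  · exact h1
  · apply Finset.eq_univ_of_card
    have h2 := card_units_le k hk (F := F)
    rw [← hd] at h2
    have h3 : Fintype.card Fˣ = Fintype.card F - 1 := Fintype.card_units F
    have h4 : (S k (F := F) d).card ≤ Fintype.card F := Finset.card_le_univ _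
    have h5 : 0 < Fintype.card F := Fintype.card_pos
    omega

end SumPowAux

/-- Let `F_q` be the finite field with `q` elements, `k ≥ 1`, and `d = gcd(k, q−1)`. If every
element of `F_q` is a sum of finitely many `k`-th powers, then every element of `F_q` is a sum
of `d` many `k`-th powers (and in particular a sum of `k` many `k`-th powers). -/
theorem sum_gcd_kth_powers_of_coverable
    {F : Type*} [Field F] [Fintype F] (k : ℕ) (hk : 0 < k)
    (h : ∀ v : F, ∃ (l : ℕ) (β : Fin l → F), v = ∑ i, β i ^ k) :
    (∀ v : F, ∃ β : Fin (Nat.gcd k (Fintype.card F - 1)) → F, v = ∑ i, β i ^ k) ∧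
    (∀ v : F, ∃ β : Fin k → F, v = ∑ i, β i ^ k) := by
  classical
  open SumPowAux in
  have hcov : ∀ v : F, ∃ l, v ∈ S k l := by
    intro v
    obtain ⟨l, β, hβ⟩ := h v
    exact ⟨l, (mem_S k l v).2 ⟨β, hβ⟩⟩
  have huniv := S_gcd_univ k hk hcov
  have hd : ∀ v : F, v ∈ S k (Nat.gcd k (Fintype.card F - 1)) := by
    intro v; rw [huniv]; exact Finset.mem_univ v
  constructor
  · intro v
    exact (mem_S k _ v).1 (hd v)
  · intro v
    have hdk : Nat.gcd k (Fintype.card F - 1) ≤ k :=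
      Nat.le_of_dvd hk (Nat.gcd_dvd_left _ _)
    exact (mem_S k k v).1 (S_mono k hk hdk (hd v))
end

section
/- Let F_q be the finite field with q elements and let k be a positive integer. If q > k⁴, then every element of F_q can be written as a sum of two k-th powers, i.e. for every v ∈ F_q there exist a, b ∈ F_q with v = a^k + b^k. -/
open Finset

namespace SumTwoKthAux

variable {F : Type*} [Field F] [Fintype F] [DecidableEq F]

/-- Values of multiplicative characters at nonzero elements have absolute value 1. -/
lemma norm_apply_eq_one (χ : MulChar F ℂ) {u : F} (hu : u ≠ 0) : ‖χ u‖ = 1 := by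
  have hcard : Fintype.card Fˣ ≠ 0 := Fintype.card_ne_zero
  have h1 : (χ u) ^ (Fintype.card Fˣ) = 1 := by
    rw [← MulChar.pow_apply' χ hcard u, MulChar.pow_card_eq_one,
      MulChar.one_apply hu.isUnit]
  exact Complex.norm_eq_one_of_pow_eq_one h1 hcard

lemma norm_jacobiSum_eq {χ ψ : MulChar F ℂ} (hχ : χ ≠ 1) (hψ : ψ ≠ 1) (hχψ : χ * ψ ≠ 1) :
    ‖jacobiSum χ ψ‖ = Real.sqrt (Fintype.card F) := by
  have hchar : ringChar ℂ ≠ ringChar F := by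
    have h0 : ringChar ℂ = 0 := ringChar.eq_zero
    have h1 : ringChar F ≠ 0 := CharP.char_ne_zero_of_finite F (ringChar F)
    rw [h0]
    exact fun h => h1 h.symm
  have key := jacobiSum_mul_jacobiSum_inv hchar hχ hψ hχψ
  have hconj : jacobiSum χ⁻¹ ψ⁻¹ = (starRingEnd ℂ) (jacobiSum χ ψ) := by
    simp only [jacobiSum, map_sum, map_mul]
    refine Finset.sum_congr rfl fun x _ => ?_
    rw [show (starRingEnd ℂ) (χ x) = star (χ x) from rfl,
      show (starRingEnd ℂ) (ψ (1 - x)) = star (ψ (1 - x)) from rfl,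
      MulChar.star_apply', MulChar.star_apply']
  rw [hconj, Complex.mul_conj] at key
  have : Complex.normSq (jacobiSum χ ψ) = (Fintype.card F : ℝ) := by
    exact_mod_cast key
  rw [Complex.norm_def, this]

/-- If `u` is not a `k`-th power (of a unit), there is a character `χ₀` with `χ₀ ^ k = 1`
and `χ₀ u ≠ 1`. -/
lemma exists_char {k : ℕ} {u : Fˣ} (hu : ∀ x : Fˣ, x ^ k ≠ u) :
    ∃ χ₀ : MulChar F ℂ, χ₀ ^ k = 1 ∧ χ₀ u ≠ 1 := by
  set S := (powMonoidHom k : Fˣ →* Fˣ).range with hS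
  haveI : Finite (Fˣ ⧸ S) := Quotient.finite _
  have hu' : (QuotientGroup.mk u : Fˣ ⧸ S) ≠ 1 := by
    rw [Ne, QuotientGroup.eq_one_iff]
    rintro ⟨x, hx⟩
    exact hu x hx
  haveI : NeZero ((Monoid.exponent (Fˣ ⧸ S) : ℂ)) :=
    ⟨Nat.cast_ne_zero.mpr (Monoid.neZero_exponent_of_finite (G := Fˣ ⧸ S)).out⟩
  obtain ⟨φ, hφ⟩ := CommGroup.exists_apply_ne_one_of_hasEnoughRootsOfUnity (Fˣ ⧸ S) ℂ hu'
  set lam : Fˣ →* ℂˣ := φ.comp (QuotientGroup.mk' S) with hlam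
  refine ⟨MulChar.ofUnitHom lam, ?_, ?_⟩
  · rw [MulChar.eq_one_iff]
    intro a
    rw [MulChar.pow_apply_coe, MulChar.ofUnitHom_coe]
    have : lam a ^ k = 1 := by
      rw [← map_pow]
      have : (QuotientGroup.mk (a ^ k) : Fˣ ⧸ S) = 1 := by
        rw [QuotientGroup.eq_one_iff]
        exact ⟨a, rfl⟩
      simp only [hlam, MonoidHom.comp_apply, QuotientGroup.mk'_apply, this, map_one]
    calc ((lam a : ℂˣ) : ℂ) ^ k = ((lam a ^ k : ℂˣ) : ℂ) := by push_cast; ring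
    _ = 1 := by rw [this]; rfl
  · rw [MulChar.ofUnitHom_coe]
    intro h
    apply hφ
    ext
    exact h

/-- Multiplying by a fixed character with nontrivial value kills the sum. -/
lemma sum_eq_zero_of_exists_ne_one {k : ℕ} {T : Finset (MulChar F ℂ)}
    (hT : ∀ χ, χ ∈ T ↔ χ ^ k = 1) {u : F} {χ₀ : MulChar F ℂ}
    (h₀ : χ₀ ∈ T) (hval : χ₀ u ≠ 1) : ∑ χ ∈ T, χ u = 0 := by
  have key : ∑ χ ∈ T, χ u = ∑ χ ∈ T, (χ₀ * χ) u := by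
    refine Finset.sum_nbij' (i := fun χ => χ₀⁻¹ * χ) (j := fun χ => χ₀ * χ) ?_ ?_ ?_ ?_ ?_
    · intro χ hχ
      rw [hT]
      rw [mul_pow, inv_pow, (hT χ₀).mp h₀, (hT χ).mp hχ, inv_one, one_mul]
    · intro χ hχ
      rw [hT]
      rw [mul_pow, (hT χ₀).mp h₀, (hT χ).mp hχ, one_mul]
    · intro χ _
      show χ₀ * (χ₀⁻¹ * χ) = χ
      rw [← mul_assoc, mul_inv_cancel, one_mul]
    · intro χ _
      show χ₀⁻¹ * (χ₀ * χ) = χ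
      rw [← mul_assoc, inv_mul_cancel, one_mul]
    · intro χ _
      show χ u = (χ₀ * (χ₀⁻¹ * χ)) u
      rw [← mul_assoc, mul_inv_cancel, one_mul]
  have expand : ∑ χ ∈ T, (χ₀ * χ) u = χ₀ u * ∑ χ ∈ T, χ u := by
    rw [Finset.mul_sum]
    exact Finset.sum_congr rfl fun χ _ => MulChar.mul_apply χ₀ χ u
  have : (χ₀ u - 1) * ∑ χ ∈ T, χ u = 0 := by
    rw [sub_mul, one_mul, ← expand, ← key, sub_self]
  rcases mul_eq_zero.mp this with h | h
  · exact absurd (sub_eq_zero.mp h) hval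
  · exact h

/-- The number of characters `χ` with `χ ^ k = 1` equals the number of `k`-th roots
of unity in `F`. -/
lemma card_T_eq {k : ℕ} (hk : 0 < k) {T : Finset (MulChar F ℂ)}
    (hT : ∀ χ, χ ∈ T ↔ χ ^ k = 1) :
    T.card = (univ.filter fun x : F => x ^ k = 1).card := by
  haveI : NeZero ((Monoid.exponent Fˣ : ℂ)) :=
    ⟨Nat.cast_ne_zero.mpr (Monoid.neZero_exponent_of_finite (G := Fˣ)).out⟩
  obtain ⟨e⟩ := MulChar.mulEquiv_units F ℂ
  have step1 : T.card = (univ.filter fun x : Fˣ => x ^ k = 1).card := by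
    refine Finset.card_nbij (fun χ => e χ) ?_ ?_ ?_
    · intro χ hχ
      simp only [Finset.mem_coe, mem_filter, mem_univ, true_and]
      rw [← map_pow, (hT χ).mp hχ, map_one]
    · exact fun χ _ χ' _ h => e.injective h
    · intro x hx
      simp only [Finset.coe_filter, Set.mem_setOf_eq, mem_univ, true_and] at hx
      refine ⟨e.symm x, ?_, by simp⟩
      simp only [Finset.mem_coe, hT]
      apply e.injective
      rw [map_pow, e.apply_symm_apply, hx, map_one]
  have step2 : (univ.filter fun x : Fˣ => x ^ k = 1).card
      = (univ.filter fun x : F => x ^ k = 1).card := by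
    refine Finset.card_nbij (fun x => (x : F)) ?_ ?_ ?_
    · intro x hx
      simp only [Finset.mem_coe, mem_filter, mem_univ, true_and] at hx ⊢
      rw [← Units.val_pow_eq_pow_val, hx, Units.val_one]
    · exact fun x _ y _ h => Units.ext h
    · intro y hy
      simp only [Finset.coe_filter, Set.mem_setOf_eq, mem_univ, true_and] at hy
      have hy0 : IsUnit y := by
        refine IsUnit.of_mul_eq_one (y ^ (k - 1)) ?_
        calc y * y ^ (k - 1) = y ^ (1 + (k - 1)) := by rw [pow_add, pow_one]
          _ = y ^ k := by rw [Nat.add_sub_cancel' hk]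
          _ = 1 := hy
      refine ⟨hy0.unit, ?_, hy0.unit_spec⟩
      simp only [Finset.mem_coe, mem_filter, mem_univ, true_and]
      ext
      rw [Units.val_pow_eq_pow_val, hy0.unit_spec, hy, Units.val_one]
  rw [step1, step2]

lemma card_fiber_eq {k : ℕ} (hk : 0 < k) {u x₀ : F} (hu : u ≠ 0) (hx₀ : x₀ ^ k = u) :
    (univ.filter fun x : F => x ^ k = u).card
      = (univ.filter fun x : F => x ^ k = 1).card := by
  have hx₀0 : x₀ ≠ 0 := by
    rintro rfl
    rw [zero_pow hk.ne'] at hx₀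
    exact hu hx₀.symm
  refine (Finset.card_nbij (fun x => x * x₀) ?_ ?_ ?_).symm
  · intro x hx
    simp only [Finset.mem_coe, mem_filter, mem_univ, true_and] at hx ⊢
    rw [mul_pow, hx, one_mul, hx₀]
  · exact fun x _ y _ h => mul_right_cancel₀ hx₀0 h
  · intro y hy
    simp only [Finset.coe_filter, Set.mem_setOf_eq, mem_univ, true_and] at hy
    refine ⟨y / x₀, ?_, by field_simp⟩
    simp only [Finset.mem_coe, mem_filter, mem_univ, true_and]
    rw [div_pow, hy, hx₀, div_self hu]

/-- The character-sum formula for the number of `k`-th roots of `a`. -/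
lemma count_roots_eq {k : ℕ} (hk : 0 < k) {T : Finset (MulChar F ℂ)}
    (hT : ∀ χ, χ ∈ T ↔ χ ^ k = 1) (a : F) :
    ((univ.filter fun x : F => x ^ k = a).card : ℂ)
      = (if a = 0 then 1 else 0) + ∑ χ ∈ T, χ a := by
  rcases eq_or_ne a 0 with rfl | ha
  · have h1 : (univ.filter fun x : F => x ^ k = 0) = {0} := by
      ext x
      simp [pow_eq_zero_iff hk.ne']
    have h2 : ∑ χ ∈ T, χ (0 : F) = 0 :=
      Finset.sum_eq_zero fun χ _ => χ.map_zero
    rw [h1, h2, if_pos rfl]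
    simp
  · rw [if_neg ha, zero_add]
    by_cases hex : ∃ x : F, x ^ k = a
    · obtain ⟨x₀, hx₀⟩ := hex
      have hx₀0 : x₀ ≠ 0 := by
        rintro rfl
        rw [zero_pow hk.ne'] at hx₀
        exact ha hx₀.symm
      rw [card_fiber_eq hk ha hx₀, ← card_T_eq hk hT]
      have : ∀ χ ∈ T, χ a = 1 := by
        intro χ hχ
        rw [← hx₀, map_pow, ← MulChar.pow_apply' χ hk.ne', (hT χ).mp hχ,
          MulChar.one_apply hx₀0.isUnit]
      rw [Finset.sum_congr rfl this, Finset.sum_const, nsmul_eq_mul, mul_one]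
    · have hcard : (univ.filter fun x : F => x ^ k = a).card = 0 := by
        rw [Finset.card_eq_zero, Finset.filter_eq_empty_iff]
        intro x _
        exact fun h => hex ⟨x, h⟩
      rw [hcard]
      have hu : ∀ x : Fˣ, x ^ k ≠ ha.isUnit.unit := by
        intro x h
        apply hex
        refine ⟨(x : F), ?_⟩
        rw [← Units.val_pow_eq_pow_val, h, IsUnit.unit_spec]
      obtain ⟨χ₀, hχ₀k, hχ₀u⟩ := exists_char hu
      rw [IsUnit.unit_spec] at hχ₀u
      rw [Nat.cast_zero]
      exact (sum_eq_zero_of_exists_ne_one hT ((hT χ₀).mpr hχ₀k) hχ₀u).symm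

/-- Twisted Jacobi sum. -/
lemma sum_apply_mul_apply (χ ψ : MulChar F ℂ) {v : F} (hv : v ≠ 0) :
    ∑ a : F, χ a * ψ (v - a) = χ v * ψ v * jacobiSum χ ψ := by
  rw [jacobiSum, Finset.mul_sum]
  refine (Fintype.sum_bijective (fun x : F => v * x) (Equiv.mulLeft₀ v hv).bijective
    (fun x => χ v * ψ v * (χ x * ψ (1 - x))) (fun a => χ a * ψ (v - a)) fun x => ?_).symm
  show χ v * ψ v * (χ x * ψ (1 - x)) = χ (v * x) * ψ (v - v * x)
  rw [map_mul, show v - v * x = v * (1 - x) by ring, map_mul]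
  ring

end SumTwoKthAux

open SumTwoKthAux in
/-- If `F_q` is the finite field with `q` elements, `k ≥ 1`, and `q > k⁴`, then every element
of `F_q` is a sum of two `k`-th powers. -/
theorem sum_two_kth_powers_of_card_gt_pow_four
    {F : Type*} [Field F] [Fintype F] (k : ℕ) (hk : 0 < k)
    (hq : Fintype.card F > k ^ 4) :
    ∀ v : F, ∃ a b : F, v = a ^ k + b ^ k := by
  classical
  intro v
  rcases eq_or_ne v 0 with rfl | hv
  · exact ⟨0, 0, by rw [zero_pow hk.ne', add_zero]⟩
  set q : ℕ := Fintype.card F with hqdef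
  -- the set of characters of order dividing k
  haveI : Fintype (MulChar F ℂ) := Fintype.ofFinite _
  set T : Finset (MulChar F ℂ) := univ.filter (fun χ => χ ^ k = 1) with hTdef
  have hT : ∀ χ : MulChar F ℂ, χ ∈ T ↔ χ ^ k = 1 := by
    intro χ; simp [hTdef]
  have h1T : (1 : MulChar F ℂ) ∈ T := (hT 1).mpr (one_pow k)
  -- cardinality bound for T
  have hTk : T.card ≤ k := by
    rw [card_T_eq hk hT]
    have hsub : (univ.filter fun x : F => x ^ k = 1)
        ⊆ (Polynomial.nthRoots k (1 : F)).toFinset := by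
      intro x hx
      simp only [mem_filter, mem_univ, true_and] at hx
      rw [Multiset.mem_toFinset, Polynomial.mem_nthRoots hk]
      exact hx
    calc (univ.filter fun x : F => x ^ k = 1).card
        ≤ (Polynomial.nthRoots k (1 : F)).toFinset.card := Finset.card_le_card hsub
      _ ≤ Multiset.card (Polynomial.nthRoots k (1 : F)) := Multiset.toFinset_card_le _
      _ ≤ k := Polynomial.card_nthRoots k (1 : F)
  -- the count of representations
  set N : ℕ := (univ.filter fun p : F × F => p.1 ^ k + p.2 ^ k = v).card with hNdef
  -- Step 1: N as a sum over a of products of root counts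
  have step1 : (N : ℂ) = ∑ a : F,
      ((univ.filter fun x : F => x ^ k = a).card : ℂ)
        * ((univ.filter fun y : F => y ^ k = v - a).card : ℂ) := by
    have hfib : N = ∑ a : F, ((univ.filter fun p : F × F =>
        p.1 ^ k = a ∧ p.2 ^ k = v - a).card) := by
      rw [hNdef]
      rw [Finset.card_eq_sum_card_fiberwise
        (f := fun p : F × F => p.1 ^ k) (t := univ) (fun p _ => mem_univ _)]
      refine Finset.sum_congr rfl fun a _ => ?_
      congr 1
      ext p
      simp only [mem_filter, mem_univ, true_and, Finset.filter_filter]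
      constructor
      · rintro ⟨h1, h2⟩
        exact ⟨h2, by rw [← h1, ← h2]; ring⟩
      · rintro ⟨h1, h2⟩
        exact ⟨by rw [h1, h2]; ring, h1⟩
    rw [hfib, Nat.cast_sum]
    refine Finset.sum_congr rfl fun a _ => ?_
    have : (univ.filter fun p : F × F => p.1 ^ k = a ∧ p.2 ^ k = v - a)
        = (univ.filter fun x : F => x ^ k = a) ×ˢ
          (univ.filter fun y : F => y ^ k = v - a) := by
      ext p
      simp only [mem_filter, mem_univ, true_and, Finset.mem_product]
    rw [this, Finset.card_product, Nat.cast_mul]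
  -- Step 2: substitute the character formula
  have step2 : (N : ℂ) = ∑ χ ∈ T, χ v + ∑ ψ ∈ T, ψ v
      + ∑ χ ∈ T, ∑ ψ ∈ T, χ v * ψ v * jacobiSum χ ψ := by
    rw [step1]
    have expand : ∀ a : F,
        ((univ.filter fun x : F => x ^ k = a).card : ℂ)
          * ((univ.filter fun y : F => y ^ k = v - a).card : ℂ)
        = ((if a = 0 then (1 : ℂ) else 0) + ∑ χ ∈ T, χ a)
          * ((if v - a = 0 then (1 : ℂ) else 0) + ∑ ψ ∈ T, ψ (v - a)) := by
      intro a
      rw [count_roots_eq hk hT a, count_roots_eq hk hT (v - a)]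
    rw [Finset.sum_congr rfl fun a _ => expand a]
    have key : ∀ a : F,
        ((if a = 0 then (1 : ℂ) else 0) + ∑ χ ∈ T, χ a)
          * ((if v - a = 0 then (1 : ℂ) else 0) + ∑ ψ ∈ T, ψ (v - a))
        = (if a = 0 then (1 : ℂ) else 0) * (if v - a = 0 then (1 : ℂ) else 0)
          + (if a = 0 then (1 : ℂ) else 0) * (∑ ψ ∈ T, ψ (v - a))
          + (if v - a = 0 then (1 : ℂ) else 0) * (∑ χ ∈ T, χ a)
          + (∑ χ ∈ T, χ a) * (∑ ψ ∈ T, ψ (v - a)) := by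
      intro a; ring
    rw [Finset.sum_congr rfl fun a _ => key a]
    rw [Finset.sum_add_distrib, Finset.sum_add_distrib, Finset.sum_add_distrib]
    have e1 : ∑ a : F, (if a = 0 then (1 : ℂ) else 0) * (if v - a = 0 then (1 : ℂ) else 0)
        = 0 := by
      refine Finset.sum_eq_zero fun a _ => ?_
      rcases eq_or_ne a 0 with rfl | ha
      · simp [sub_zero, hv]
      · rw [if_neg ha, zero_mul]
    have e2 : ∑ a : F, (if a = 0 then (1 : ℂ) else 0) * (∑ ψ ∈ T, ψ (v - a))
        = ∑ ψ ∈ T, ψ v := by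
      rw [Finset.sum_eq_single 0]
      · rw [if_pos rfl, one_mul, sub_zero]
      · intro a _ ha; rw [if_neg ha, zero_mul]
      · intro h; exact absurd (mem_univ 0) h
    have e3 : ∑ a : F, (if v - a = 0 then (1 : ℂ) else 0) * (∑ χ ∈ T, χ a)
        = ∑ χ ∈ T, χ v := by
      rw [Finset.sum_eq_single v]
      · rw [sub_self, if_pos rfl, one_mul]
      · intro a _ ha; rw [if_neg (sub_ne_zero.mpr (Ne.symm ha)), zero_mul]
      · intro h; exact absurd (mem_univ v) h
    have e4 : ∑ a : F, (∑ χ ∈ T, χ a) * (∑ ψ ∈ T, ψ (v - a))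
        = ∑ χ ∈ T, ∑ ψ ∈ T, χ v * ψ v * jacobiSum χ ψ := by
      have swap : ∀ a : F, (∑ χ ∈ T, χ a) * (∑ ψ ∈ T, ψ (v - a))
          = ∑ χ ∈ T, ∑ ψ ∈ T, χ a * ψ (v - a) := by
        intro a
        rw [Finset.sum_mul]
        exact Finset.sum_congr rfl fun χ _ => Finset.mul_sum _ _ _
      rw [Finset.sum_congr rfl fun a _ => swap a]
      rw [Finset.sum_comm]
      refine Finset.sum_congr rfl fun χ _ => ?_
      rw [Finset.sum_comm]
      refine Finset.sum_congr rfl fun ψ _ => ?_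
      exact sum_apply_mul_apply χ ψ hv
    rw [e1, e2, e3, e4]
    ring
  -- Step 3: extract the main term
  set te : Finset (MulChar F ℂ) := T.erase 1 with htedef
  have hte : te.card ≤ k - 1 := by
    rw [htedef]
    calc (T.erase 1).card = T.card - 1 := Finset.card_erase_of_mem h1T
      _ ≤ k - 1 := Nat.sub_le_sub_right hTk 1
  have hone : (1 : MulChar F ℂ) v = 1 := MulChar.one_apply hv.isUnit
  have hq2 : jacobiSum (1 : MulChar F ℂ) 1 = (q : ℂ) - 2 := jacobiSum_one_one
  -- linear sums
  have hlin : ∑ χ ∈ T, χ v = 1 + ∑ χ ∈ te, χ v := by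
    rw [htedef, ← Finset.add_sum_erase T _ h1T, hone]
  -- double sum split
  have hdouble : ∑ χ ∈ T, ∑ ψ ∈ T, χ v * ψ v * jacobiSum χ ψ
      = ((q : ℂ) - 2) + ∑ ψ ∈ te, ψ v * jacobiSum 1 ψ
        + (∑ χ ∈ te, χ v * jacobiSum χ 1
          + ∑ χ ∈ te, ∑ ψ ∈ te, χ v * ψ v * jacobiSum χ ψ) := by
    rw [← Finset.add_sum_erase T _ h1T, ← htedef]
    have inner1 : ∑ ψ ∈ T, (1 : MulChar F ℂ) v * ψ v * jacobiSum 1 ψ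
        = ((q : ℂ) - 2) + ∑ ψ ∈ te, ψ v * jacobiSum 1 ψ := by
      rw [← Finset.add_sum_erase T _ h1T, ← htedef, hone, hq2]
      simp only [one_mul]
    have inner2 : ∀ χ ∈ te, ∑ ψ ∈ T, χ v * ψ v * jacobiSum χ ψ
        = χ v * jacobiSum χ 1 + ∑ ψ ∈ te, χ v * ψ v * jacobiSum χ ψ := by
      intro χ _
      rw [← Finset.add_sum_erase T _ h1T, ← htedef, hone, mul_one]
    rw [inner1, Finset.sum_congr rfl inner2]
    try rw [Finset.sum_add_distrib]
    try ring
  -- Assemble: N = q + E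
  have hsq : (0 : ℝ) ≤ (q : ℝ) := Nat.cast_nonneg q
  set s : ℝ := Real.sqrt q with hsdef
  -- bounds on error terms
  have habs1 : ∀ χ ∈ te, ‖χ v‖ = 1 := fun χ _ => norm_apply_eq_one χ hv
  have hs1 : (1 : ℝ) ≤ s := by
    rw [hsdef]
    rw [show (1 : ℝ) = Real.sqrt 1 by rw [Real.sqrt_one]]
    apply Real.sqrt_le_sqrt
    have : (1 : ℕ) ≤ q := Fintype.card_pos
    exact_mod_cast this
  have hterm : ∀ χ ∈ te, ∀ ψ ∈ te, ‖χ v * ψ v * jacobiSum χ ψ‖ ≤ s := by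
    intro χ hχ ψ hψ
    have hχ1 : χ ≠ 1 := Finset.ne_of_mem_erase hχ
    have hψ1 : ψ ≠ 1 := Finset.ne_of_mem_erase hψ
    rw [norm_mul, norm_mul, habs1 χ hχ, habs1 ψ hψ, one_mul, one_mul]
    by_cases hχψ : χ * ψ = 1
    · have : ψ = χ⁻¹ := by
        rw [eq_inv_iff_mul_eq_one, mul_comm]; exact hχψ
      rw [this, jacobiSum_nontrivial_inv hχ1, norm_neg]
      calc ‖χ (-1)‖ = 1 := norm_apply_eq_one χ (by norm_num)
        _ ≤ s := hs1
    · rw [norm_jacobiSum_eq hχ1 hψ1 hχψ]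
  have hE4 : ‖∑ χ ∈ te, ∑ ψ ∈ te, χ v * ψ v * jacobiSum χ ψ‖
      ≤ ((k : ℝ) - 1) ^ 2 * s := by
    calc ‖∑ χ ∈ te, ∑ ψ ∈ te, χ v * ψ v * jacobiSum χ ψ‖
        ≤ ∑ χ ∈ te, ‖∑ ψ ∈ te, χ v * ψ v * jacobiSum χ ψ‖ :=
          norm_sum_le _ _
      _ ≤ ∑ χ ∈ te, ∑ ψ ∈ te, ‖χ v * ψ v * jacobiSum χ ψ‖ :=
          Finset.sum_le_sum fun χ _ => norm_sum_le _ _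
      _ ≤ ∑ χ ∈ te, ∑ _ψ ∈ te, s :=
          Finset.sum_le_sum fun χ hχ => Finset.sum_le_sum fun ψ hψ => hterm χ hχ ψ hψ
      _ = (te.card : ℝ) * ((te.card : ℝ) * s) := by
          rw [Finset.sum_const, Finset.sum_const, nsmul_eq_mul, nsmul_eq_mul]
      _ ≤ ((k : ℝ) - 1) ^ 2 * s := by
          have hcard : (te.card : ℝ) ≤ (k : ℝ) - 1 := by
            have h1k : (1 : ℕ) ≤ k := hk
            calc (te.card : ℝ) ≤ ((k - 1 : ℕ) : ℝ) := Nat.cast_le.mpr hte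
              _ = (k : ℝ) - 1 := by
                rw [Nat.cast_sub h1k, Nat.cast_one]
          have h0 : (0 : ℝ) ≤ (te.card : ℝ) := Nat.cast_nonneg _
          have h0s : (0 : ℝ) ≤ s := Real.sqrt_nonneg _
          calc (te.card : ℝ) * ((te.card : ℝ) * s)
              = ((te.card : ℝ) * (te.card : ℝ)) * s := by ring
            _ ≤ (((k : ℝ) - 1) * ((k : ℝ) - 1)) * s :=
                mul_le_mul_of_nonneg_right
                  (mul_le_mul hcard hcard h0 (le_trans h0 hcard)) h0s
            _ = ((k : ℝ) - 1) ^ 2 * s := by ring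
  have hE1 : ‖∑ χ ∈ te, χ v‖ ≤ (k : ℝ) - 1 := by
    calc ‖∑ χ ∈ te, χ v‖ ≤ ∑ χ ∈ te, ‖χ v‖ :=
        norm_sum_le _ _
      _ = (te.card : ℝ) := by
          rw [Finset.sum_congr rfl habs1, Finset.sum_const, nsmul_eq_mul, mul_one]
      _ ≤ (k : ℝ) - 1 := by
          have h1k : (1 : ℕ) ≤ k := hk
          calc (te.card : ℝ) ≤ ((k - 1 : ℕ) : ℝ) := Nat.cast_le.mpr hte
            _ = (k : ℝ) - 1 := by rw [Nat.cast_sub h1k, Nat.cast_one]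
  have hE2 : ‖∑ ψ ∈ te, ψ v * jacobiSum 1 ψ‖ ≤ (k : ℝ) - 1 := by
    calc ‖∑ ψ ∈ te, ψ v * jacobiSum 1 ψ‖
        ≤ ∑ ψ ∈ te, ‖ψ v * jacobiSum 1 ψ‖ := norm_sum_le _ _
      _ = (te.card : ℝ) := by
          rw [Finset.sum_congr rfl (fun ψ hψ => ?_), Finset.sum_const, nsmul_eq_mul,
            mul_one]
          rw [norm_mul, habs1 ψ hψ, one_mul,
            jacobiSum_one_nontrivial (Finset.ne_of_mem_erase hψ)]
          simp
      _ ≤ (k : ℝ) - 1 := by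
          have h1k : (1 : ℕ) ≤ k := hk
          calc (te.card : ℝ) ≤ ((k - 1 : ℕ) : ℝ) := Nat.cast_le.mpr hte
            _ = (k : ℝ) - 1 := by rw [Nat.cast_sub h1k, Nat.cast_one]
  have hE3 : ‖∑ χ ∈ te, χ v * jacobiSum χ 1‖ ≤ (k : ℝ) - 1 := by
    calc ‖∑ χ ∈ te, χ v * jacobiSum χ 1‖
        ≤ ∑ χ ∈ te, ‖χ v * jacobiSum χ 1‖ := norm_sum_le _ _
      _ = (te.card : ℝ) := by
          rw [Finset.sum_congr rfl (fun χ hχ => ?_), Finset.sum_const, nsmul_eq_mul,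
            mul_one]
          rw [norm_mul, habs1 χ hχ, one_mul, jacobiSum_comm,
            jacobiSum_one_nontrivial (Finset.ne_of_mem_erase hχ)]
          simp
      _ ≤ (k : ℝ) - 1 := by
          have h1k : (1 : ℕ) ≤ k := hk
          calc (te.card : ℝ) ≤ ((k - 1 : ℕ) : ℝ) := Nat.cast_le.mpr hte
            _ = (k : ℝ) - 1 := by rw [Nat.cast_sub h1k, Nat.cast_one]
  -- combine
  have hNq : ‖(N : ℂ) - (q : ℂ)‖
      ≤ 4 * ((k : ℝ) - 1) + ((k : ℝ) - 1) ^ 2 * s := by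
    have formula : (N : ℂ) - (q : ℂ)
        = (∑ χ ∈ te, χ v) + (∑ χ ∈ te, χ v)
          + (∑ ψ ∈ te, ψ v * jacobiSum 1 ψ)
          + ((∑ χ ∈ te, χ v * jacobiSum χ 1)
            + ∑ χ ∈ te, ∑ ψ ∈ te, χ v * ψ v * jacobiSum χ ψ) := by
      rw [step2, hlin, hdouble]
      ring
    rw [formula]
    calc ‖(∑ χ ∈ te, χ v) + (∑ χ ∈ te, χ v)
          + (∑ ψ ∈ te, ψ v * jacobiSum 1 ψ)
          + ((∑ χ ∈ te, χ v * jacobiSum χ 1)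
            + ∑ χ ∈ te, ∑ ψ ∈ te, χ v * ψ v * jacobiSum χ ψ)‖
        ≤ ‖(∑ χ ∈ te, χ v) + (∑ χ ∈ te, χ v)
            + (∑ ψ ∈ te, ψ v * jacobiSum 1 ψ)‖
          + ‖(∑ χ ∈ te, χ v * jacobiSum χ 1)
            + ∑ χ ∈ te, ∑ ψ ∈ te, χ v * ψ v * jacobiSum χ ψ‖ := by
          exact norm_add_le _ _
      _ ≤ (‖(∑ χ ∈ te, χ v) + (∑ χ ∈ te, χ v)‖
            + ‖∑ ψ ∈ te, ψ v * jacobiSum 1 ψ‖)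
          + (‖∑ χ ∈ te, χ v * jacobiSum χ 1‖
            + ‖∑ χ ∈ te, ∑ ψ ∈ te, χ v * ψ v * jacobiSum χ ψ‖) := by
          gcongr <;> exact norm_add_le _ _
      _ ≤ ((‖∑ χ ∈ te, χ v‖ + ‖∑ χ ∈ te, χ v‖)
            + ‖∑ ψ ∈ te, ψ v * jacobiSum 1 ψ‖)
          + (‖∑ χ ∈ te, χ v * jacobiSum χ 1‖
            + ‖∑ χ ∈ te, ∑ ψ ∈ te, χ v * ψ v * jacobiSum χ ψ‖) := by
          gcongr
          exact norm_add_le _ _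
      _ ≤ (((k : ℝ) - 1 + ((k : ℝ) - 1)) + ((k : ℝ) - 1))
          + (((k : ℝ) - 1) + ((k : ℝ) - 1) ^ 2 * s) := by
          gcongr
      _ = 4 * ((k : ℝ) - 1) + ((k : ℝ) - 1) ^ 2 * s := by ring
  -- final numeric inequality
  have hks : (k : ℝ) ^ 2 < s := by
    have h1 : ((k : ℝ) ^ 2) ^ 2 < (q : ℝ) := by
      have : ((k ^ 4 : ℕ) : ℝ) < (q : ℝ) := Nat.cast_lt.mpr hq
      calc ((k : ℝ) ^ 2) ^ 2 = ((k ^ 4 : ℕ) : ℝ) := by push_cast; ring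
        _ < (q : ℝ) := this
    have h2 : s ^ 2 = (q : ℝ) := Real.sq_sqrt hsq
    nlinarith [Real.sqrt_nonneg (q : ℝ), sq_nonneg ((k : ℝ) ^ 2 - s)]
  have hfinal : 4 * ((k : ℝ) - 1) + ((k : ℝ) - 1) ^ 2 * s < (q : ℝ) := by
    have hs2 : s ^ 2 = (q : ℝ) := Real.sq_sqrt hsq
    have hk1 : (1 : ℝ) ≤ (k : ℝ) := by exact_mod_cast hk
    nlinarith [Real.sqrt_nonneg (q : ℝ)]
  -- conclude N ≠ 0
  have hN0 : N ≠ 0 := by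
    intro h0
    rw [h0] at hNq
    simp only [Nat.cast_zero, zero_sub, norm_neg, Complex.norm_natCast] at hNq
    exact absurd (hNq.trans_lt hfinal) (lt_irrefl _)
  obtain ⟨p, hp⟩ := Finset.card_ne_zero.mp (by rwa [hNdef] at hN0)
  simp only [mem_filter, mem_univ, true_and] at hp
  exact ⟨p.1, p.2, hp.symm⟩
end

section
/- Let F_q be the finite field with q elements, q ≥ 2, and let k be a positive integer. If E is a subset of F_q with |E| > qk/√(q−1), then E contains two distinct elements whose difference is a k-th power: there exist x, y ∈ E with x ≠ y and some c ∈ F_q such that y − x = c^k. -/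
open Finset Complex

namespace SarkozyAux

variable {F : Type*} [Field F] [Fintype F] [DecidableEq F]

lemma norm_mulChar_eq_one (ψ : MulChar F ℂ) {a : F} (ha : a ≠ 0) : ‖ψ a‖ = 1 := by
  have h : (ψ a) ^ (Fintype.card Fˣ) = 1 := by
    rw [← map_pow]
    have : IsUnit a := ha.isUnit
    rw [← this.unit_spec, ← Units.val_pow_eq_pow_val, pow_card_eq_one, Units.val_one, map_one]
  exact Complex.norm_eq_one_of_pow_eq_one h Fintype.card_ne_zero

lemma conj_mulChar (ψ : MulChar F ℂ) (a : F) :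
    (starRingEnd ℂ) (ψ a) = ψ a⁻¹ := by
  rw [← MulChar.inv_apply' ψ, ← MulChar.star_apply']
  rfl

lemma offdiag_sum (ψ : MulChar F ℂ) (hψ : ψ ≠ 1) {y y' : F} (hyy : y ≠ y') :
    ∑ x : F, ψ (y - x) * (starRingEnd ℂ) (ψ (y' - x)) = -1 := by
  have hzero : ψ 0 = 0 := ψ.map_nonunit (by simp)
  have hstep : ∀ x : F, ψ (y - x) * (starRingEnd ℂ) (ψ (y' - x))
      = ψ ((y - x) * (y' - x)⁻¹) := by
    intro x
    rw [conj_mulChar, map_mul]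
  simp_rw [hstep]
  have h1 : ∑ x : F, ψ ((y - x) * (y' - x)⁻¹)
      = ∑ x ∈ Finset.univ.erase y', ψ ((y - x) * (y' - x)⁻¹) := by
    rw [← Finset.sum_erase_add _ _ (Finset.mem_univ y')]
    simp [hzero]
  rw [h1]
  have h2 : ∑ x ∈ Finset.univ.erase y', ψ ((y - x) * (y' - x)⁻¹)
      = ∑ w ∈ Finset.univ.erase 1, ψ w := by
    refine Finset.sum_nbij' (fun x => (y - x) * (y' - x)⁻¹)
      (fun w => (w * y' - y) * (w - 1)⁻¹) ?_ ?_ ?_ ?_ ?_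
    · intro x hx
      have hx' : x ≠ y' := Finset.ne_of_mem_erase hx
      have hs : y' - x ≠ 0 := sub_ne_zero.mpr (Ne.symm hx')
      refine Finset.mem_erase.mpr ⟨?_, Finset.mem_univ _⟩
      intro h
      apply hyy
      have h' : (y - x) * (y' - x)⁻¹ = 1 := h
      rw [← div_eq_mul_inv, div_eq_one_iff_eq hs] at h'
      exact sub_left_inj.mp h' 
    · intro w hw
      have hw' : w ≠ 1 := Finset.ne_of_mem_erase hw
      have hs : w - 1 ≠ 0 := sub_ne_zero.mpr hw'
      refine Finset.mem_erase.mpr ⟨?_, Finset.mem_univ _⟩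
      intro h
      apply hyy
      have h' : (w * y' - y) * (w - 1)⁻¹ = y' := h
      rw [← div_eq_mul_inv, div_eq_iff hs] at h'
      linear_combination -h' 
    · intro x hx
      have hx' : x ≠ y' := Finset.ne_of_mem_erase hx
      have hs : y' - x ≠ 0 := sub_ne_zero.mpr (Ne.symm hx')
      have hyy' : y - y' ≠ 0 := sub_ne_zero.mpr hyy
      field_simp
      linear_combination x * mul_inv_cancel₀ hyy'
    · intro w hw
      have hw' : w ≠ 1 := Finset.ne_of_mem_erase hw
      have hs : w - 1 ≠ 0 := sub_ne_zero.mpr hw'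
      have hyy' : y - y' ≠ 0 := sub_ne_zero.mpr hyy
      field_simp
      ring_nf
      linear_combination w * mul_inv_cancel₀ hyy'
    · intro x hx; rfl
  rw [h2]
  have h3 : ∑ w ∈ Finset.univ.erase 1, ψ w + ψ 1 = ∑ w : F, ψ w :=
    Finset.sum_erase_add _ _ (Finset.mem_univ 1)
  have h4 : ∑ w : F, ψ w = 0 := MulChar.sum_eq_zero_of_ne_one hψ
  have h5 : ψ 1 = 1 := ψ.map_one
  rw [h4, h5] at h3
  linear_combination h3

end SarkozyAux

namespace SarkozyAux

variable {F : Type*} [Field F] [Fintype F] [DecidableEq F]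

lemma diag_sum (ψ : MulChar F ℂ) (y : F) :
    ∑ x : F, ψ (y - x) * (starRingEnd ℂ) (ψ (y - x)) = (Fintype.card F : ℂ) - 1 := by
  have hzero : ψ 0 = 0 := ψ.map_nonunit (by simp)
  rw [← Finset.sum_erase_add _ _ (Finset.mem_univ y)]
  have h1 : ∀ x ∈ Finset.univ.erase y, ψ (y - x) * (starRingEnd ℂ) (ψ (y - x)) = 1 := by
    intro x hx
    have hx' : y - x ≠ 0 := sub_ne_zero.mpr (Ne.symm (Finset.ne_of_mem_erase hx))
    rw [Complex.mul_conj]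
    rw [Complex.normSq_eq_norm_sq, norm_mulChar_eq_one ψ hx']
    norm_num
  rw [Finset.sum_congr rfl h1]
  simp [Finset.card_erase_of_mem, sub_self, hzero]
  rw [Nat.cast_sub Fintype.card_pos]
  simp

lemma second_moment (ψ : MulChar F ℂ) (hψ : ψ ≠ 1) (E : Finset F) :
    ∑ x : F, ‖∑ y ∈ E, ψ (y - x)‖ ^ 2 = (E.card : ℝ) * ((Fintype.card F : ℝ) - E.card) := by
  have key : ∑ x : F, (∑ y ∈ E, ψ (y - x)) * (starRingEnd ℂ) (∑ y ∈ E, ψ (y - x))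
      = (E.card : ℂ) * ((Fintype.card F : ℂ) - E.card) := by
    have expand : ∀ x : F, (∑ y ∈ E, ψ (y - x)) * (starRingEnd ℂ) (∑ y ∈ E, ψ (y - x))
        = ∑ y ∈ E, ∑ y' ∈ E, ψ (y - x) * (starRingEnd ℂ) (ψ (y' - x)) := by
      intro x
      rw [map_sum, Finset.sum_mul_sum]
    simp_rw [expand]
    rw [Finset.sum_comm]
    have swap2 : ∀ y ∈ E, ∑ x : F, ∑ y' ∈ E, ψ (y - x) * (starRingEnd ℂ) (ψ (y' - x))
        = ∑ y' ∈ E, ∑ x : F, ψ (y - x) * (starRingEnd ℂ) (ψ (y' - x)) :=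
      fun y _ => Finset.sum_comm
    rw [Finset.sum_congr rfl swap2]
    have inner : ∀ y ∈ E, ∑ y' ∈ E, ∑ x : F, ψ (y - x) * (starRingEnd ℂ) (ψ (y' - x))
        = ((Fintype.card F : ℂ) - 1) - ((E.card : ℂ) - 1) := by
      intro y hy
      rw [← Finset.sum_erase_add _ _ hy, diag_sum ψ y]
      have offd : ∀ y' ∈ E.erase y, ∑ x : F, ψ (y - x) * (starRingEnd ℂ) (ψ (y' - x)) = -1 :=
        fun y' hy' => offdiag_sum ψ hψ (Ne.symm (Finset.ne_of_mem_erase hy'))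
      rw [Finset.sum_congr rfl offd, Finset.sum_const, Finset.card_erase_of_mem hy]
      have hE1 : 1 ≤ E.card := Finset.card_pos.mpr ⟨y, hy⟩
      rw [nsmul_eq_mul, Nat.cast_sub hE1]
      push_cast
      ring
    rw [Finset.sum_congr rfl inner, Finset.sum_const]
    push_cast
    ring
  have cast : ∀ x : F, (∑ y ∈ E, ψ (y - x)) * (starRingEnd ℂ) (∑ y ∈ E, ψ (y - x))
      = ((‖∑ y ∈ E, ψ (y - x)‖ ^ 2 : ℝ) : ℂ) := by
    intro x
    rw [Complex.mul_conj, Complex.normSq_eq_norm_sq]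
  simp_rw [cast] at key
  exact_mod_cast key

lemma key_bound (ψ : MulChar F ℂ) (hψ : ψ ≠ 1) (E : Finset F) :
    ‖∑ x ∈ E, ∑ y ∈ E, ψ (y - x)‖ ≤ (E.card : ℝ) * Real.sqrt (Fintype.card F) := by
  set f : F → ℂ := fun x => ∑ y ∈ E, ψ (y - x) with hf
  have h1 : ‖∑ x ∈ E, f x‖ ≤ ∑ x ∈ E, ‖f x‖ := norm_sum_le _ _
  have h2 : (∑ x ∈ E, ‖f x‖) ^ 2 ≤ (E.card : ℝ) * ∑ x ∈ E, ‖f x‖ ^ 2 := by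
    have := Finset.sum_mul_sq_le_sq_mul_sq E (fun _ => (1 : ℝ)) (fun x => ‖f x‖)
    simpa using this
  have h3 : ∑ x ∈ E, ‖f x‖ ^ 2 ≤ ∑ x : F, ‖f x‖ ^ 2 :=
    Finset.sum_le_sum_of_subset_of_nonneg (Finset.subset_univ E)
      (fun x _ _ => sq_nonneg _)
  have h4 : ∑ x : F, ‖f x‖ ^ 2 ≤ (E.card : ℝ) * (Fintype.card F : ℝ) := by
    rw [second_moment ψ hψ E]
    have : (0:ℝ) ≤ (E.card : ℝ) := Nat.cast_nonneg _
    nlinarith [sq_nonneg (E.card : ℝ)]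
  have hnn : (0:ℝ) ≤ ∑ x ∈ E, ‖f x‖ := Finset.sum_nonneg fun x _ => norm_nonneg _
  have hsq : ‖∑ x ∈ E, f x‖ ^ 2 ≤ (E.card : ℝ) ^ 2 * (Fintype.card F : ℝ) := by
    have := mul_le_mul_of_nonneg_left (h3.trans h4) (Nat.cast_nonneg (α := ℝ) E.card)
    nlinarith [h1, h2, norm_nonneg (∑ x ∈ E, f x)]
  have hrhs : (0:ℝ) ≤ (E.card : ℝ) * Real.sqrt (Fintype.card F) :=
    mul_nonneg (Nat.cast_nonneg _) (Real.sqrt_nonneg _)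
  nlinarith [Real.sq_sqrt (Nat.cast_nonneg (α := ℝ) (Fintype.card F)),
    Real.sqrt_nonneg ((Fintype.card F : ℝ)), norm_nonneg (∑ x ∈ E, f x),
    sq_nonneg (‖∑ x ∈ E, f x‖ - (E.card : ℝ) * Real.sqrt (Fintype.card F))]

end SarkozyAux

namespace SarkozyAux

variable {F : Type*} [Field F] [Fintype F] [DecidableEq F]

lemma exists_good_char (k : ℕ) (hk : 0 < k) (hq : 2 ≤ Fintype.card F) :
    ∃ (d : ℕ) (χ : MulChar F ℂ), 0 < d ∧ d ≤ k ∧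
      (∀ j : ℕ, 0 < j → j < d → χ ^ j ≠ 1) ∧
      (∀ u : F, u ≠ 0 → (χ u) ^ d = 1) ∧
      (∀ u : F, u ≠ 0 → χ u = 1 → ∃ c : F, c ^ k = u) := by
  classical
  set n' := Fintype.card F - 1 with hn'
  set d := k.gcd n' with hd
  have hd0 : 0 < d := Nat.gcd_pos_of_pos_left _ hk
  have hdk : d ≤ k := Nat.gcd_le_left _ hk
  have hddvd : d ∣ n' := Nat.gcd_dvd_right _ _
  have hcardu : Fintype.card Fˣ = n' := by simp [hn', Fintype.card_units]
  set ζ : ℂ := Complex.exp (2 * Real.pi * Complex.I / d) with hζdef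
  have hζ : IsPrimitiveRoot ζ d := Complex.isPrimitiveRoot_exp d hd0.ne'
  set ζu : ℂˣ := (hζ.isUnit hd0.ne').unit with hζu
  have hζumem : ζu ∈ rootsOfUnity (Fintype.card Fˣ) ℂ := by
    rw [_root_.mem_rootsOfUnity]
    have hzu : (ζu : ℂ) = ζ := (hζ.isUnit hd0.ne').unit_spec
    ext
    push_cast
    rw [hzu, hcardu]
    obtain ⟨t, ht⟩ := hddvd
    rw [ht, pow_mul, hζ.pow_eq_one, one_pow]
  obtain ⟨g, hg⟩ := IsCyclic.exists_generator (α := Fˣ)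
  set χ : MulChar F ℂ := MulChar.ofRootOfUnity hζumem hg with hχdef
  have hχg : χ ↑g = ζ := by
    rw [hχdef, MulChar.ofRootOfUnity_spec]
    simp [hζu]
  have hgn : g ^ n' = 1 := by rw [← hcardu]; exact pow_card_eq_one
  -- decompose any nonzero u
  have hval : ∀ u : F, u ≠ 0 → ∃ m : ℕ, ((g ^ m : Fˣ) : F) = u ∧ χ u = ζ ^ m := by
    intro u hu
    obtain ⟨m, hm⟩ := Submonoid.mem_powers_iff _ _ |>.mp
      (mem_powers_iff_mem_zpowers.mpr (hg (Units.mk0 u hu)))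
    have hmu : ((g ^ m : Fˣ) : F) = u := by rw [hm, Units.val_mk0]
    refine ⟨m, hmu, ?_⟩
    have : u = ((g : Fˣ) : F) ^ m := by rw [← Units.val_pow_eq_pow_val, hmu]
    rw [this, map_pow, hχg]
  refine ⟨d, χ, hd0, hdk, ?_, ?_, ?_⟩
  · intro j hj0 hjd hcon
    have h1 : (χ ^ j) ↑g = (χ ↑g) ^ j := MulChar.pow_apply_coe χ j g
    rw [hcon, MulChar.one_apply_coe, hχg] at h1
    exact hζ.pow_ne_one_of_pos_of_lt hj0.ne' hjd h1.symm
  · intro u hu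
    obtain ⟨m, hm, hχu⟩ := hval u hu
    rw [hχu, ← pow_mul, mul_comm, pow_mul, hζ.pow_eq_one, one_pow]
  · intro u hu hker
    obtain ⟨m, hm, hχu⟩ := hval u hu
    rw [hχu] at hker
    obtain ⟨t, ht⟩ := hζ.dvd_of_pow_eq_one m hker
    -- Bezout: g ^ d is a k-th power
    have hbez : (d : ℤ) = k * Nat.gcdA k n' + n' * Nat.gcdB k n' := Nat.gcd_eq_gcd_ab k n'
    set c0 : Fˣ := g ^ (Nat.gcdA k n') with hc0
    have hgd : g ^ d = c0 ^ k := by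
      have : (g : Fˣ) ^ (d : ℤ) = c0 ^ k := by
        rw [hbez, zpow_add, mul_comm (k : ℤ), zpow_mul, zpow_natCast, zpow_mul,
          zpow_natCast, hgn, one_zpow, mul_one, hc0]
      rw [← zpow_natCast g d, this]
    refine ⟨((c0 ^ t : Fˣ) : F), ?_⟩
    have : (g ^ m : Fˣ) = (c0 ^ t) ^ k := by
      rw [ht, pow_mul, hgd, ← pow_mul, mul_comm k t, pow_mul]
    rw [this] at hm
    calc ((c0 ^ t : Fˣ) : F) ^ k = (((c0 ^ t) ^ k : Fˣ) : F) := by norm_cast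
      _ = u := hm

end SarkozyAux

/-- **Analogue of Sárközy's theorem in finite fields.**
Let `F_q` be the finite field with `q ≥ 2` elements and `k ≥ 1`. If `E ⊆ F_q` has
`|E| > q·k/√(q−1)`, then `E` contains two distinct elements whose difference is a
`k`-th power. -/
theorem sarkozy_finite_field
    {F : Type*} [Field F] [Fintype F] [DecidableEq F] (k : ℕ) (hk : 0 < k)
    (hq : 2 ≤ Fintype.card F)
    (E : Finset F)
    (hE : (E.card : ℝ) >
      (Fintype.card F : ℝ) * (k : ℝ) / Real.sqrt ((Fintype.card F : ℝ) - 1)) :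
    ∃ x ∈ E, ∃ y ∈ E, x ≠ y ∧ ∃ c : F, y - x = c ^ k := by
  classical
  by_contra hcon
  push_neg at hcon
  obtain ⟨d, χ, hd0, hdk, hpow_ne, hroot, hker⟩ := SarkozyAux.exists_good_char k hk hq
  have hzero : χ 0 = 0 := χ.map_nonunit (by simp)
  -- each off-diagonal pair contributes 0
  have pair : ∀ x ∈ E, ∀ y ∈ E, x ≠ y → ∑ j ∈ Finset.range d, (χ (y - x)) ^ j = 0 := by
    intro x hx y hy hxy
    have hne : y - x ≠ 0 := sub_ne_zero.mpr (Ne.symm hxy)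
    have hz1 : χ (y - x) ≠ 1 := by
      intro h1
      obtain ⟨c, hc⟩ := hker (y - x) hne h1
      exact hcon x hx y hy hxy c hc.symm
    have hzd : (χ (y - x)) ^ d = 1 := hroot (y - x) hne
    rw [geom_sum_eq hz1 d, hzd, sub_self, zero_div]
  set L : ℂ := ∑ x ∈ E, ∑ y ∈ E, ∑ j ∈ Finset.range d, (χ (y - x)) ^ j with hL
  have hL1 : L = (E.card : ℂ) := by
    have inner1 : ∀ x ∈ E, ∑ y ∈ E, ∑ j ∈ Finset.range d, (χ (y - x)) ^ j = 1 := by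
      intro x hx
      rw [← Finset.sum_erase_add _ _ hx]
      have herase : ∀ y ∈ E.erase x, ∑ j ∈ Finset.range d, (χ (y - x)) ^ j = 0 :=
        fun y hy => pair x hx y (Finset.mem_of_mem_erase hy)
          (Ne.symm (Finset.ne_of_mem_erase hy))
      rw [Finset.sum_congr rfl herase, Finset.sum_const, smul_zero, zero_add,
        sub_self, hzero]
      rw [Finset.sum_eq_single_of_mem 0 (Finset.mem_range.mpr hd0)
        (fun j _ hj0 => zero_pow hj0)]
      norm_num
    rw [hL, Finset.sum_congr rfl inner1, Finset.sum_const, nsmul_eq_mul, mul_one]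
  have hL2 : L = ∑ j ∈ Finset.range d, ∑ x ∈ E, ∑ y ∈ E, (χ (y - x)) ^ j := by
    rw [hL]
    rw [Finset.sum_congr rfl (fun x (_ : x ∈ E) => Finset.sum_comm
      (s := E) (t := Finset.range d) (f := fun y j => (χ (y - x)) ^ j))]
    exact Finset.sum_comm
  rw [Finset.range_eq_Ico, Finset.sum_eq_sum_Ico_succ_bot hd0] at hL2
  have hj0 : ∑ x ∈ E, ∑ y ∈ E, (χ (y - x)) ^ 0 = (E.card : ℂ) ^ 2 := by
    simp [sq]
  rw [hj0] at hL2
  set R : ℂ := ∑ j ∈ Finset.Ico 1 d, ∑ x ∈ E, ∑ y ∈ E, (χ (y - x)) ^ j with hR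
  -- norm bound on R
  set q : ℝ := (Fintype.card F : ℝ) with hqdef
  have hq2 : (2 : ℝ) ≤ q := by rw [hqdef]; exact_mod_cast hq
  have hRbound : ‖R‖ ≤ ((d - 1 : ℕ) : ℝ) * ((E.card : ℝ) * Real.sqrt q) := by
    have hterm : ∀ j ∈ Finset.Ico 1 d,
        ‖∑ x ∈ E, ∑ y ∈ E, (χ (y - x)) ^ j‖ ≤ (E.card : ℝ) * Real.sqrt q := by
      intro j hj
      obtain ⟨hj1, hjd⟩ := Finset.mem_Ico.mp hj
      have hjne : (j : ℕ) ≠ 0 := by omega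
      have hrw : ∀ x y : F, (χ (y - x)) ^ j = (χ ^ j) (y - x) :=
        fun x y => (MulChar.pow_apply' χ hjne _).symm
      simp_rw [hrw]
      exact SarkozyAux.key_bound (χ ^ j) (hpow_ne j (by omega) hjd) E
    calc ‖R‖ ≤ ∑ j ∈ Finset.Ico 1 d, ‖∑ x ∈ E, ∑ y ∈ E, (χ (y - x)) ^ j‖ :=
          norm_sum_le _ _
      _ ≤ ∑ j ∈ Finset.Ico 1 d, (E.card : ℝ) * Real.sqrt q :=
          Finset.sum_le_sum hterm
      _ = ((d - 1 : ℕ) : ℝ) * ((E.card : ℝ) * Real.sqrt q) := by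
          rw [Finset.sum_const, Nat.card_Ico, nsmul_eq_mul]
  -- identify ‖R‖
  have hRval : R = (E.card : ℂ) - (E.card : ℂ) ^ 2 := by
    have h := hL1.symm.trans hL2
    linear_combination -h
  have hcard_le : (E.card : ℝ) ≤ (E.card : ℝ) ^ 2 := by
    exact_mod_cast Nat.le_self_pow two_ne_zero E.card
  have hnormR : ‖R‖ = (E.card : ℝ) ^ 2 - (E.card : ℝ) := by
    rw [hRval]
    have : (E.card : ℂ) - (E.card : ℂ) ^ 2 = (((E.card : ℝ) - (E.card : ℝ) ^ 2 : ℝ) : ℂ) := by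
      push_cast; ring
    rw [this, Complex.norm_real, Real.norm_eq_abs, abs_of_nonpos (by linarith)]
    ring
  -- main inequality
  set e : ℝ := (E.card : ℝ) with he
  set K : ℝ := (k : ℝ) with hKdef
  have hK1 : (1 : ℝ) ≤ K := by rw [hKdef]; exact_mod_cast hk
  have hd1K : ((d - 1 : ℕ) : ℝ) ≤ K - 1 := by
    rw [Nat.cast_sub hd0]
    push_cast
    have : (d : ℝ) ≤ K := by rw [hKdef]; exact_mod_cast hdk
    linarith
  have hsqq : 0 ≤ Real.sqrt q := Real.sqrt_nonneg _
  have main : e ^ 2 - e ≤ (K - 1) * (e * Real.sqrt q) := by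
    rw [← hnormR]
    refine hRbound.trans ?_
    have he0 : (0:ℝ) ≤ e * Real.sqrt q := mul_nonneg (Nat.cast_nonneg _) hsqq
    exact mul_le_mul_of_nonneg_right hd1K he0
  -- final arithmetic
  have hsq1pos : 0 < Real.sqrt (q - 1) := Real.sqrt_pos.mpr (by linarith)
  have hQpos : (0:ℝ) < q := by linarith
  have hepos : (0:ℝ) < e := lt_trans (by positivity) hE
  have he_le : e - 1 ≤ (K - 1) * Real.sqrt q := by
    have h := main
    have : e * (e - 1) ≤ e * ((K - 1) * Real.sqrt q) := by nlinarith
    exact le_of_mul_le_mul_left this hepos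
  have hsq_le : Real.sqrt q ≤ q / Real.sqrt (q - 1) := by
    rw [le_div_iff₀ hsq1pos]
    have : Real.sqrt q * Real.sqrt (q - 1) = Real.sqrt (q * (q - 1)) :=
      (Real.sqrt_mul (by linarith) _).symm
    rw [this]
    calc Real.sqrt (q * (q - 1)) ≤ Real.sqrt (q * q) :=
          Real.sqrt_le_sqrt (by nlinarith)
      _ = q := Real.sqrt_mul_self (le_of_lt hQpos)
  have h1le : (1:ℝ) ≤ q / Real.sqrt (q - 1) := by
    rw [le_div_iff₀ hsq1pos, one_mul]
    calc Real.sqrt (q - 1) ≤ Real.sqrt (q * q) := Real.sqrt_le_sqrt (by nlinarith)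
      _ = q := Real.sqrt_mul_self (le_of_lt hQpos)
  have hid : q * K / Real.sqrt (q - 1) = (K - 1) * (q / Real.sqrt (q - 1))
      + q / Real.sqrt (q - 1) := by ring
  have hprod : (K - 1) * Real.sqrt q ≤ (K - 1) * (q / Real.sqrt (q - 1)) :=
    mul_le_mul_of_nonneg_left hsq_le (by linarith)
  rw [hid] at hE
  linarith
end

section
/- Let F_q be a finite field of characteristic p, let f ∈ F_q[x] be irreducible, and let i and k be positive integers with p ∤ k. If every element of the quotient ring F_q[x]/⟨f⟩ is a k-th power, then every element of F_q[x]/⟨f^i⟩ can be written as a sum of two k-th powers. -/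
lemma binom_first_order {R : Type*} [CommRing R] (b e : R) (k : ℕ) :
    ∃ s : R, (b + e) ^ k = b ^ k + (k : R) * b ^ (k - 1) * e + e ^ 2 * s := by
  induction k with
  | zero => exact ⟨0, by simp⟩
  | succ k ih =>
      obtain ⟨s, hs⟩ := ih
      rcases Nat.eq_zero_or_pos k with hk0 | hk0
      · subst hk0; exact ⟨0, by ring⟩
      · refine ⟨b * s + (k : R) * b ^ (k - 1) + e * s, ?_⟩
        have hb : b ^ (k - 1) * b = b ^ k := by
          rw [← pow_succ, Nat.sub_add_cancel hk0]
        have h1 : k + 1 - 1 = k := rfl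
        rw [h1]
        push_cast
        linear_combination (b + e) * hs + (k : R) * e * hb

/-- Let `F_q` be a finite field of characteristic `p`, `f ∈ F_q[x]` irreducible, and
`i, k ≥ 1` with `p ∤ k`. If every element of `F_q[x]/⟨f⟩` is a `k`-th power, then every
element of `F_q[x]/⟨f^i⟩` is a sum of two `k`-th powers. -/
theorem hensel_lift_kth_powers_quotient
    {F : Type*} [Field F] [Fintype F]
    (f : Polynomial F) (hf : Irreducible f)
    (i k : ℕ) (hi : 0 < i) (hk : 0 < k)
    (hp : ¬ (ringChar F ∣ k))
    (h : ∀ a : Polynomial F ⧸ Ideal.span {f}, ∃ b : Polynomial F ⧸ Ideal.span {f}, a = b ^ k) :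
    ∀ a : Polynomial F ⧸ Ideal.span {f ^ i},
      ∃ b₁ b₂ : Polynomial F ⧸ Ideal.span {f ^ i}, a = b₁ ^ k + b₂ ^ k := by
  have hfp : Prime f := hf.prime
  -- f does not divide the constant polynomial k
  have hkF : (k : F) ≠ 0 := fun h0 => hp ((CharP.cast_eq_zero_iff F (ringChar F) k).mp h0)
  have hkpoly : ¬ f ∣ ((k : ℕ) : Polynomial F) := by
    intro hdvd
    rw [← Polynomial.C_eq_natCast] at hdvd
    exact hf.not_isUnit (isUnit_of_dvd_unit hdvd (Polynomial.isUnit_C.mpr hkF.isUnit))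
  -- Key claim: Hensel lifting at polynomial level
  have key : ∀ j : ℕ, 0 < j → ∀ A : Polynomial F,
      ∃ b c : Polynomial F, ¬ f ∣ b ∧ f ^ j ∣ A - (b ^ k + c ^ k) := by
    intro j hj
    induction j with
    | zero => exact absurd hj (lt_irrefl 0)
    | succ j ih =>
      rcases Nat.eq_zero_or_pos j with hj0 | hj0
      · -- base case j = 1
        subst hj0
        intro A
        obtain ⟨β, hβ⟩ := h (Ideal.Quotient.mk (Ideal.span {f}) (A - 1))
        obtain ⟨c, hc⟩ := Ideal.Quotient.mk_surjective β
        refine ⟨1, c, fun hdvd => hf.not_isUnit (isUnit_of_dvd_one hdvd), ?_⟩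
        rw [pow_one, ← Ideal.mem_span_singleton, ← Ideal.Quotient.eq_zero_iff_mem]
        have : A - (1 ^ k + c ^ k) = (A - 1) - c ^ k := by ring
        rw [this, map_sub, map_pow, hc, ← hβ, sub_self]
      · -- inductive step
        intro A
        obtain ⟨b, c, hb, hdvd⟩ := ih hj0 A
        obtain ⟨t, ht⟩ := hdvd
        -- solve k * b^(k-1) * δ ≡ t mod f using coprimality
        have hndvd : ¬ f ∣ ((k : ℕ) : Polynomial F) * b ^ (k - 1) := by
          intro hd
          rcases hfp.dvd_mul.mp hd with hd | hd
          · exact hkpoly hd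
          · exact hb (hfp.dvd_of_dvd_pow hd)
        obtain ⟨u, v, huv⟩ := (hf.coprime_iff_not_dvd.mpr hndvd)
        set δ : Polynomial F := v * t with hδdef
        have hsolve : f ∣ ((k : ℕ) : Polynomial F) * b ^ (k - 1) * δ - t := by
          refine ⟨-(u * t), ?_⟩
          have : v * (((k : ℕ) : Polynomial F) * b ^ (k - 1)) = 1 - u * f := by
            linear_combination huv
          rw [hδdef]
          linear_combination t * this
        obtain ⟨r, hr⟩ := hsolve
        obtain ⟨s, hs⟩ := binom_first_order b (δ * f ^ j) k
        refine ⟨b + δ * f ^ j, c, ?_, ?_⟩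
        · intro hdvd'
          apply hb
          have h1 : f ∣ δ * f ^ j := Dvd.dvd.mul_left (dvd_pow_self f hj0.ne') δ
          have h2 : f ∣ (b + δ * f ^ j) - δ * f ^ j := dvd_sub hdvd' h1
          simpa using h2
        · have expand : A - ((b + δ * f ^ j) ^ k + c ^ k)
              = f ^ (j + 1) * (-r) - f ^ (2 * j) * (δ ^ 2 * s) := by
            have h2j : f ^ (2 * j) = f ^ j * f ^ j := by rw [two_mul, pow_add]
            have hfr : ((k : ℕ) : Polynomial F) * b ^ (k - 1) * δ - t = f * r := hr
            rw [hs, h2j, pow_succ]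
            linear_combination ht - f ^ j * hfr
          rw [expand]
          exact dvd_sub (Dvd.intro _ rfl) (Dvd.dvd.mul_right (pow_dvd_pow f (by omega)) _)
  -- Conclude
  intro a
  obtain ⟨A, hA⟩ := Ideal.Quotient.mk_surjective a
  obtain ⟨b, c, _, hdvd⟩ := key i hi A
  refine ⟨Ideal.Quotient.mk _ b, Ideal.Quotient.mk _ c, ?_⟩
  have h0 : Ideal.Quotient.mk (Ideal.span {f ^ i}) (A - (b ^ k + c ^ k)) = 0 := by
    rw [Ideal.Quotient.eq_zero_iff_mem, Ideal.mem_span_singleton]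
    exact hdvd
  rw [← hA, ← sub_eq_zero]
  simpa [sub_eq_zero, map_sub, map_add, map_pow] using h0
end

section
/- Let F_q be a finite field of characteristic p, let f ∈ F_q[x] be irreducible, and let i, k, m be positive integers with p ∤ k and m > 1. Assume every element of F_q[x]/⟨f⟩ can be written as a sum of m k-th powers. If −1 is a k-th power in F_q, then every element of F_q[x]/⟨f^i⟩ can be written as a sum of m k-th powers; in any case, every element of F_q[x]/⟨f^i⟩ can be written as a sum of m+1 k-th powers. -/
private lemma pow_one_add_aux {R : Type*} [CommRing R] (k : ℕ) (e : R) :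
    ∃ s : R, (1 + e) ^ k = 1 + k * e + e ^ 2 * s := by
  induction k with
  | zero => exact ⟨0, by simp⟩
  | succ k ih =>
    obtain ⟨s, hs⟩ := ih
    refine ⟨s + k + e * s, ?_⟩
    rw [pow_succ, hs]
    push_cast
    ring

private lemma exists_kth_root_one_add_aux {R : Type*} [CommRing R] {k : ℕ}
    (hk : IsUnit (k : R)) : ∀ j : ℕ, ∀ n : R, n ^ j = 0 → ∃ v : R, v ^ k = 1 + n := by
  intro j
  induction j using Nat.strong_induction_on with
  | _ j ih =>
    intro n hn
    match j, hn with
    | 0, hn =>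
      have h01 : (0 : R) = 1 := by simpa using hn.symm
      have : Subsingleton R := subsingleton_of_zero_eq_one h01
      exact ⟨1, Subsingleton.elim _ _⟩
    | 1, hn =>
      rw [pow_one] at hn
      exact ⟨1, by simp [hn]⟩
    | (j + 2), hn =>
      obtain ⟨u, hu⟩ := hk
      set e : R := (↑u⁻¹ : R) * n with he
      obtain ⟨s, hs⟩ := pow_one_add_aux k e
      have hke : (k : R) * e = n := by
        rw [he, ← mul_assoc, ← hu, ← Units.val_mul, mul_inv_cancel, Units.val_one, one_mul]
      have henil : IsNilpotent e := by
        refine ⟨j + 2, ?_⟩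
        rw [he, mul_pow, hn, mul_zero]
      obtain ⟨w, hw⟩ := henil.isUnit_one_add
      have hwk : (↑w : R) ^ k = 1 + n + e ^ 2 * s := by
        rw [hw, hs, hke]
      have hwinv : (↑w : R) * ↑w⁻¹ = 1 := w.mul_inv
      set m : R := -(e ^ 2 * s * (↑w⁻¹ : R) ^ k) with hm
      have hkey : (↑w : R) ^ k * (1 + m) = 1 + n := by
        have h1 : (↑w : R) ^ k * (↑w⁻¹ : R) ^ k = 1 := by
          rw [← mul_pow, hwinv, one_pow]
        calc (↑w : R) ^ k * (1 + m)
            = (↑w : R) ^ k - e ^ 2 * s * ((↑w : R) ^ k * (↑w⁻¹ : R) ^ k) := by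
              rw [hm]; ring
          _ = 1 + n := by rw [h1, hwk]; ring
      -- m is a multiple of n ^ 2, hence m ^ (j+1) = 0
      have hmn : ∃ c : R, m = n ^ 2 * c := by
        refine ⟨-((↑u⁻¹ : R) ^ 2 * s * (↑w⁻¹ : R) ^ k), ?_⟩
        rw [hm, he]; ring
      obtain ⟨c, hc⟩ := hmn
      have hmpow : m ^ (j + 1) = 0 := by
        have h2 : n ^ (2 * (j + 1)) = 0 := by
          have : 2 * (j + 1) = (j + 2) + j := by ring
          rw [this, pow_add, hn, zero_mul]
        rw [hc, mul_pow, ← pow_mul, h2, zero_mul]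
      obtain ⟨v₁, hv₁⟩ := ih (j + 1) (by omega) m hmpow
      refine ⟨↑w * v₁, ?_⟩
      rw [mul_pow, hv₁, hkey]

private lemma exists_kth_root_one_add {R : Type*} [CommRing R] {k : ℕ}
    (hk : IsUnit (k : R)) {n : R} (hn : IsNilpotent n) : ∃ v : R, v ^ k = 1 + n := by
  obtain ⟨j, hj⟩ := hn
  exact exists_kth_root_one_add_aux hk j n hj

private lemma absorb_nilpotent {R : Type*} [CommRing R] {k : ℕ}
    (hk : IsUnit (k : R)) {B n : R} (hB : IsUnit B) (hn : IsNilpotent n) :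
    ∃ D : R, D ^ k = B ^ k + n := by
  obtain ⟨u, rfl⟩ := hB
  have hn' : IsNilpotent ((↑u⁻¹ : R) ^ k * n) := by
    obtain ⟨j, hj⟩ := hn
    exact ⟨j, by rw [mul_pow, hj, mul_zero]⟩
  obtain ⟨v, hv⟩ := exists_kth_root_one_add hk hn'
  refine ⟨↑u * v, ?_⟩
  have h1 : (↑u : R) ^ k * (↑u⁻¹ : R) ^ k = 1 := by
    rw [← mul_pow, u.mul_inv, one_pow]
  calc (↑u * v : R) ^ k = (↑u : R) ^ k * (1 + (↑u⁻¹ : R) ^ k * n) := by rw [mul_pow, hv]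
    _ = (↑u : R) ^ k + ((↑u : R) ^ k * (↑u⁻¹ : R) ^ k) * n := by ring
    _ = (↑u : R) ^ k + n := by rw [h1, one_mul]

set_option maxHeartbeats 2000000 in
/-- Let `F_q` be a finite field of characteristic `p`, `f ∈ F_q[x]` irreducible, and
`i, k, m` positive integers with `p ∤ k` and `m > 1`. Assume every element of `F_q[x]/⟨f⟩`
is a sum of `m` many `k`-th powers. If `−1` is a `k`-th power in `F_q`, then every element
of `F_q[x]/⟨f^i⟩` is a sum of `m` many `k`-th powers; in any case, every element of
`F_q[x]/⟨f^i⟩` is a sum of `m+1` many `k`-th powers. -/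
theorem hensel_lift_sums_of_kth_powers_quotient
    {F : Type*} [Field F] [Fintype F]
    (f : Polynomial F) (hf : Irreducible f)
    (i k m : ℕ) (hi : 0 < i) (hk : 0 < k) (hm : 1 < m)
    (hp : ¬ (ringChar F ∣ k))
    (h : ∀ a : Polynomial F ⧸ Ideal.span {f},
      ∃ B : Fin m → Polynomial F ⧸ Ideal.span {f}, a = ∑ j, B j ^ k) :
    ((∃ c : F, (-1 : F) = c ^ k) →
      ∀ a : Polynomial F ⧸ Ideal.span {f ^ i},
        ∃ B : Fin m → Polynomial F ⧸ Ideal.span {f ^ i}, a = ∑ j, B j ^ k) ∧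
    (∀ a : Polynomial F ⧸ Ideal.span {f ^ i},
      ∃ B : Fin (m + 1) → Polynomial F ⧸ Ideal.span {f ^ i}, a = ∑ j, B j ^ k) := by
  classical
  have hIJ : Ideal.span {f ^ i} ≤ Ideal.span {f} :=
    Ideal.span_singleton_le_span_singleton.mpr (dvd_pow_self f hi.ne')
  set π : (Polynomial F ⧸ Ideal.span {f ^ i}) →+* (Polynomial F ⧸ Ideal.span {f}) :=
    Ideal.Quotient.factor hIJ with hπ
  -- k is a unit in the quotient ring
  have hkF : (k : F) ≠ 0 := fun h0 => hp ((ringChar.spec F k).mp h0)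
  have hkR : IsUnit ((k : ℕ) : Polynomial F ⧸ Ideal.span {f ^ i}) := by
    have := (isUnit_iff_ne_zero.mpr hkF).map
      (algebraMap F (Polynomial F ⧸ Ideal.span {f ^ i}))
    rwa [map_natCast] at this
  -- kernel elements are nilpotent
  have hnil : ∀ a : Polynomial F ⧸ Ideal.span {f ^ i}, π a = 0 → IsNilpotent a := by
    intro a ha
    obtain ⟨p, rfl⟩ := Ideal.Quotient.mk_surjective a
    rw [hπ, Ideal.Quotient.factor_mk] at ha
    have hfp : f ∣ p := by
      rwa [Ideal.Quotient.eq_zero_iff_mem, Ideal.mem_span_singleton] at ha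
    obtain ⟨t, rfl⟩ := hfp
    refine ⟨i, ?_⟩
    rw [← map_pow, Ideal.Quotient.eq_zero_iff_mem, Ideal.mem_span_singleton]
    exact ⟨t ^ i, by rw [mul_pow]⟩
  -- the target of π is a field
  haveI hmax : (Ideal.span {f}).IsMaximal := PrincipalIdealRing.isMaximal_of_irreducible hf
  have hfield : IsField (Polynomial F ⧸ Ideal.span {f}) :=
    (Ideal.Quotient.maximal_ideal_iff_isField_quotient _).mp hmax
  haveI : Nontrivial (Polynomial F ⧸ Ideal.span {f}) := Ideal.Quotient.nontrivial_iff.mpr hmax.ne_top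
  -- π is surjective
  have hsurj : ∀ s : Polynomial F ⧸ Ideal.span {f},
      ∃ C : Polynomial F ⧸ Ideal.span {f ^ i}, π C = s := by
    intro s
    obtain ⟨p, rfl⟩ := Ideal.Quotient.mk_surjective s
    exact ⟨Ideal.Quotient.mk _ p, by rw [hπ, Ideal.Quotient.factor_mk]⟩
  -- elements whose image is nonzero are units
  have hunit : ∀ B : Polynomial F ⧸ Ideal.span {f ^ i}, π B ≠ 0 → IsUnit B := by
    intro B hB
    obtain ⟨c, hc⟩ := hfield.mul_inv_cancel hB
    obtain ⟨C, hC⟩ := hsurj c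
    have h0 : π (B * C - 1) = 0 := by rw [map_sub, map_mul, map_one, hC, hc, sub_self]
    have hBC : IsUnit (B * C) := by
      have := (hnil _ h0).isUnit_one_add
      simpa using this
    exact isUnit_of_mul_isUnit_left hBC
  -- the key claim: elements with nonzero image are sums of m k-th powers
  have claim1 : ∀ a : Polynomial F ⧸ Ideal.span {f ^ i}, π a ≠ 0 →
      ∃ B : Fin m → Polynomial F ⧸ Ideal.span {f ^ i}, a = ∑ j, B j ^ k := by
    intro a ha
    obtain ⟨b, hb⟩ := h (π a)
    choose C hC using fun j => hsurj (b j)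
    have hex : ∃ j₀, b j₀ ≠ 0 := by
      by_contra hall
      push_neg at hall
      apply ha
      rw [hb]
      exact Finset.sum_eq_zero fun j _ => by rw [hall j, zero_pow hk.ne']
    obtain ⟨j₀, hj₀⟩ := hex
    have hCu : IsUnit (C j₀) := hunit _ (by rw [hC]; exact hj₀)
    set n : Polynomial F ⧸ Ideal.span {f ^ i} := a - ∑ j, C j ^ k with hn'
    have hπn : π n = 0 := by
      rw [hn', map_sub, map_sum]
      simp only [map_pow, hC]
      rw [← hb, sub_self]
    obtain ⟨D, hD⟩ := absorb_nilpotent hkR hCu (hnil n hπn)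
    refine ⟨Function.update C j₀ D, ?_⟩
    rw [Finset.sum_eq_add_sum_sdiff_singleton_of_mem (Finset.mem_univ j₀)
      (fun j => Function.update C j₀ D j ^ k)]
    have hrest : ∑ j ∈ Finset.univ \ {j₀}, Function.update C j₀ D j ^ k
        = ∑ j ∈ Finset.univ \ {j₀}, C j ^ k := by
      refine Finset.sum_congr rfl fun j hj => ?_
      have : j ≠ j₀ := by
        simp only [Finset.mem_sdiff, Finset.mem_singleton] at hj
        exact hj.2
      rw [Function.update_of_ne this]
    rw [hrest, Function.update_self, hD]
    have hsplit : ∑ j, C j ^ k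
        = C j₀ ^ k + ∑ j ∈ Finset.univ \ {j₀}, C j ^ k :=
      Finset.sum_eq_add_sum_sdiff_singleton_of_mem (Finset.mem_univ j₀) _
    rw [hn', hsplit]
    ring
  -- nilpotent elements are sums of m k-th powers when -1 is a k-th power
  have claim2 : ∀ d : Polynomial F ⧸ Ideal.span {f ^ i}, IsNilpotent d →
      ∀ c : F, (-1 : F) = c ^ k →
      ∃ B : Fin m → Polynomial F ⧸ Ideal.span {f ^ i}, d = ∑ j, B j ^ k := by
    intro d hd c hc
    obtain ⟨v, hv⟩ := exists_kth_root_one_add hkR hd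
    set c' : Polynomial F ⧸ Ideal.span {f ^ i} :=
      algebraMap F (Polynomial F ⧸ Ideal.span {f ^ i}) c with hc'
    have hck : c' ^ k = -1 := by
      rw [hc', ← map_pow, ← hc, map_neg, map_one]
    set a0 : Fin m := ⟨0, Nat.zero_lt_of_lt hm⟩ with ha0
    set a1 : Fin m := ⟨1, hm⟩ with ha1
    have hne : a0 ≠ a1 := by
      rw [ha0, ha1]
      exact Fin.ne_of_val_ne (by norm_num)
    set g : Fin m → Polynomial F ⧸ Ideal.span {f ^ i} :=
      fun j => if (j : ℕ) = 0 then v else if (j : ℕ) = 1 then c' else 0 with hg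
    have hsub : ∑ j ∈ ({a0, a1} : Finset (Fin m)), g j ^ k = ∑ j, g j ^ k := by
      refine Finset.sum_subset (Finset.subset_univ _) ?_
      intro j _ hj
      simp only [Finset.mem_insert, Finset.mem_singleton] at hj
      push_neg at hj
      have hj0 : (j : ℕ) ≠ 0 := fun hh => hj.1 (by rw [ha0]; exact Fin.ext hh)
      have hj1 : (j : ℕ) ≠ 1 := fun hh => hj.2 (by rw [ha1]; exact Fin.ext hh)
      rw [hg]
      simp only [if_neg hj0, if_neg hj1]
      rw [zero_pow hk.ne']
    have hga0 : g a0 = v := by simp [hg, ha0]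
    have hga1 : g a1 = c' := by simp only [hg, ha1]; norm_num
    refine ⟨g, ?_⟩
    rw [← hsub, Finset.sum_pair hne, hga0, hga1, hv, hck]
    ring
  constructor
  · rintro ⟨c, hc⟩ a
    by_cases ha : π a = 0
    · exact claim2 a (hnil a ha) c hc
    · exact claim1 a ha
  · intro a
    by_cases ha : π a = 0
    · have hπ1 : π (a - 1) ≠ 0 := by
        rw [map_sub, map_one, ha, zero_sub]
        exact neg_ne_zero.mpr one_ne_zero
      obtain ⟨B, hB⟩ := claim1 (a - 1) hπ1
      refine ⟨Fin.cons 1 B, ?_⟩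
      rw [Fin.sum_univ_succ]
      simp only [Fin.cons_zero, Fin.cons_succ, one_pow]
      rw [← hB]
      ring
    · obtain ⟨B, hB⟩ := claim1 a ha
      refine ⟨Fin.cons 0 B, ?_⟩
      rw [Fin.sum_univ_succ]
      simp only [Fin.cons_zero, Fin.cons_succ]
      rw [zero_pow hk.ne', ← hB, zero_add]
end

section
/- Let R be a finite ring with identity (not necessarily commutative), J its Jacobson radical, and k a positive integer with gcd(|R|, k) = 1. If every element of the quotient ring R/J is a k-th power, then every unit of R is a k-th power in R, and every non-unit element of R can be written as a sum of two k-th powers in R. -/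
/-- In a finite monoid, a right inverse gives a unit. -/
lemma aux_isUnit_of_mul_eq_one {M : Type*} [Monoid M] [Finite M] {a b : M}
    (hab : a * b = 1) : IsUnit a := by
  have hinj : Function.Injective (fun x : M => x * a) := by
    intro x y hxy
    have : x * a * b = y * a * b := by simp only at hxy; rw [hxy]
    simpa [mul_assoc, hab] using this
  obtain ⟨c, hc⟩ := (Finite.injective_iff_surjective.mp hinj) 1
  have hba : b = c := by
    have := congrArg (· * b) hc
    simp only [one_mul, mul_assoc, hab, mul_one] at this
    exact this.symm
  exact ⟨⟨a, b, hab, hba ▸ hc⟩, rfl⟩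

set_option maxHeartbeats 1000000 in
/-- **Waring's problem in finite rings, unit/`k`-th-power case.**
Let `R` be a finite (not necessarily commutative) ring with identity, `J` its Jacobson
radical, and `k ≥ 1` with `gcd(|R|, k) = 1`. If every element of `R/J` is a `k`-th power
(i.e. every `a ∈ R` is congruent to a `k`-th power mod `J`), then every unit of `R` is a
`k`-th power in `R`, and every non-unit of `R` is a sum of two `k`-th powers in `R`. -/
theorem waring_finite_ring_units
    {R : Type*} [Ring R] [Fintype R] (k : ℕ) (hk : 0 < k)
    (hcop : Nat.Coprime (Fintype.card R) k)
    (h : ∀ a : R, ∃ b : R, a - b ^ k ∈ Ideal.jacobson (⊥ : Ideal R)) :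
    (∀ u : Rˣ, ∃ b : R, (u : R) = b ^ k) ∧
    (∀ a : R, ¬ IsUnit a → ∃ b c : R, a = b ^ k + c ^ k) := by
  classical
  set J : Ideal R := Ideal.jacobson (⊥ : Ideal R) with hJ
  -- 1 + j is a unit for j ∈ J
  have hunit1J : ∀ x ∈ J, IsUnit (1 + x) := by
    intro x hx
    obtain ⟨z, hz⟩ := (Ideal.mem_jacobson_iff.mp hx) 1
    rw [Ideal.mem_bot, sub_eq_zero] at hz
    have hz' : z * (1 + x) = 1 := by
      rw [mul_add, mul_one]
      rw [mul_one] at hz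
      rw [add_comm] at hz
      exact hz
    obtain ⟨w, hw⟩ := aux_isUnit_of_mul_eq_one hz'
    have h1x : (1 + x) = ↑w⁻¹ := by
      have := congrArg (fun y => (↑w⁻¹ : R) * y) (hw ▸ hz')
      simpa [← mul_assoc, Units.inv_mul] using this
    exact h1x ▸ (w⁻¹).isUnit
  -- the Jacobson radical as a two-sided ideal, and the quotient ring
  let T : TwoSidedIdeal R := TwoSidedIdeal.jacobson ⊥
  have hTJ : ∀ x : R, x ∈ T ↔ x ∈ J := by
    intro x
    rw [TwoSidedIdeal.mem_jacobson_iff, Ideal.mem_jacobson_iff]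
    simp only [TwoSidedIdeal.mem_bot, Ideal.mem_bot]
  let c := T.ringCon
  let π : R →+* c.Quotient := c.mk'
  have hπ : ∀ a b : R, π a = π b ↔ a - b ∈ J := by
    intro a b
    constructor
    · intro hab
      exact (hTJ _).mp ((TwoSidedIdeal.rel_iff T a b).mp (c.eq.mp hab))
    · intro hab
      exact c.eq.mpr ((TwoSidedIdeal.rel_iff T a b).mpr ((hTJ _).mpr hab))
  have hπsurj : Function.Surjective π := fun s => Quotient.inductionOn' s fun a => ⟨a, rfl⟩
  have hfinS : Finite c.Quotient := Finite.of_surjective π hπsurj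
  -- every element of the quotient is a k-th power
  have hSpow : ∀ s : c.Quotient, ∃ t : c.Quotient, s = t ^ k := by
    intro s
    obtain ⟨a, rfl⟩ := hπsurj s
    obtain ⟨b, hb⟩ := h a
    refine ⟨π b, ?_⟩
    rw [← map_pow]
    exact (hπ a (b ^ k)).mpr hb
  -- units of the quotient lift: if π b is a unit then b is a unit
  have hlift : ∀ b : R, IsUnit (π b) → IsUnit b := by
    intro b hb
    obtain ⟨v, hv⟩ := hb
    obtain ⟨d, hd⟩ := hπsurj (↑v⁻¹ : c.Quotient)
    have h1 : π (b * d) = π 1 := by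
      rw [map_mul, map_one, ← hv, hd]
      exact v.mul_inv
    have h2 : b * d - 1 ∈ J := (hπ _ _).mp h1
    have h3 : IsUnit (b * d) := by
      have := hunit1J _ h2
      simpa [add_sub_cancel] using this
    obtain ⟨w, hw⟩ := h3
    have : b * (d * ↑w⁻¹) = 1 := by
      rw [← mul_assoc, ← hw]; exact w.mul_inv
    exact aux_isUnit_of_mul_eq_one this
  -- the k-th power map on units of the quotient is surjective, hence injective
  have hSsurj : Function.Surjective (fun v : (c.Quotient)ˣ => v ^ k) := by
    intro w
    obtain ⟨t, ht⟩ := hSpow (↑w : c.Quotient)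
    have htunit : IsUnit t := by
      have h1 : t * (t ^ (k - 1) * ↑w⁻¹) = 1 := by
        rw [← mul_assoc, ← pow_succ', Nat.sub_add_cancel hk, ← ht]
        exact w.mul_inv
      exact aux_isUnit_of_mul_eq_one h1
    obtain ⟨v, hv⟩ := htunit
    refine ⟨v, Units.ext ?_⟩
    simp [hv, ← ht]
  have hSinj : Function.Injective (fun v : (c.Quotient)ˣ => v ^ k) :=
    Finite.injective_iff_surjective.mpr hSsurj
  -- key: card Rˣ is coprime to k
  have hcard : Nat.Coprime (Nat.card Rˣ) k := by
    rw [Nat.coprime_iff_gcd_eq_one]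
    by_contra hne
    obtain ⟨p, hp, hpdvd⟩ := Nat.exists_prime_and_dvd hne
    have hpu : p ∣ Nat.card Rˣ := hpdvd.trans (Nat.gcd_dvd_left _ _)
    have hpk : p ∣ k := hpdvd.trans (Nat.gcd_dvd_right _ _)
    have : Fintype Rˣ := Fintype.ofFinite _
    rw [Nat.card_eq_fintype_card] at hpu
    have hfact : Fact p.Prime := ⟨hp⟩
    obtain ⟨u, hu⟩ := exists_prime_orderOf_dvd_card p hpu
    let φ : Rˣ →* (c.Quotient)ˣ := Units.map π.toMonoidHom
    have huk : u ^ k = 1 := by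
      obtain ⟨m, rfl⟩ := hpk
      rw [pow_mul, ← hu, pow_orderOf_eq_one, one_pow]
    have hφu : φ u = 1 := by
      have : (φ u) ^ k = (1 : (c.Quotient)ˣ) ^ k := by
        rw [← map_pow, huk, map_one, one_pow]
      exact hSinj this
    -- the kernel K of φ is in bijection with J
    let K := φ.ker
    have hbij : ∃ f : K → J, Function.Bijective f := by
      refine ⟨fun v => ⟨(↑(↑v : Rˣ) : R) - 1, ?_⟩, ?_, ?_⟩
      · have hv1 : π ((↑(↑v : Rˣ) : R)) = π 1 := by
          have hv := v.2
          have heq : ((φ (↑v : Rˣ) : (c.Quotient)ˣ) : c.Quotient)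
              = ((1 : (c.Quotient)ˣ) : c.Quotient) := by
            rw [MonoidHom.mem_ker.mp hv]
          rw [map_one]
          simpa [φ] using heq
        exact (hπ _ _).mp hv1
      · intro x y hxy
        simp only [Subtype.mk.injEq, sub_left_inj] at hxy
        exact Subtype.ext (Units.ext (by exact_mod_cast hxy))
      · rintro ⟨j, hj⟩
        obtain ⟨w, hw⟩ := hunit1J j hj
        have hwker : w ∈ K := by
          refine MonoidHom.mem_ker.mpr (Units.ext ?_)
          have hπw : π (1 + j) = π 1 := by
            refine (hπ _ _).mpr ?_
            simpa [add_sub_cancel_left] using hj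
          have : π ((w : R)) = 1 := by rw [hw, hπw, map_one]
          simpa [φ] using this
        exact ⟨⟨w, hwker⟩, by simp [hw]⟩
    obtain ⟨f, hf⟩ := hbij
    have hcardK : Nat.card K = Nat.card J := Nat.card_eq_of_bijective f hf
    have huK : u ∈ K := MonoidHom.mem_ker.mpr hφu
    have hporder : orderOf (⟨u, huK⟩ : K) = p := by
      rw [← hu]; exact (Subgroup.orderOf_mk u huK)
    have hpK : p ∣ Nat.card K := hporder ▸ orderOf_dvd_natCard _
    have hpJ : p ∣ Nat.card J := hcardK ▸ hpK
    have hJR : Nat.card J ∣ Nat.card R :=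
      AddSubgroup.card_addSubgroup_dvd_card J.toAddSubgroup
    have hpR : p ∣ Fintype.card R := by
      rw [← Nat.card_eq_fintype_card]; exact hpJ.trans hJR
    exact hp.not_dvd_one (hcop ▸ Nat.dvd_gcd hpR hpk)
  -- part 1: every unit is a k-th power
  have part1 : ∀ u : Rˣ, ∃ b : R, (u : R) = b ^ k := by
    intro u
    obtain ⟨v, hv⟩ := (powCoprime hcard).surjective u
    refine ⟨(↑v : R), ?_⟩
    rw [← hv, powCoprime_apply]
    exact (Units.val_pow_eq_pow_val v k).symm ▸ rfl
  refine ⟨part1, ?_⟩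
  intro a _
  obtain ⟨cc, hc⟩ := h (a - 1)
  have hmem : (a - cc ^ k) - 1 ∈ J := by
    have heq : a - 1 - cc ^ k = a - cc ^ k - 1 := sub_right_comm a 1 (cc ^ k)
    rw [← heq]
    exact hc
  have hun : IsUnit (a - cc ^ k) := by
    have := hunit1J _ hmem
    simpa [add_sub_cancel] using this
  obtain ⟨u, hu⟩ := hun
  obtain ⟨b, hb⟩ := part1 u
  exact ⟨b, cc, by rw [← hb, hu]; abel⟩
end
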